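/- arXiv:2506.21350 — 8 statements merged into one kernel-verified Lean document; each statement's English description precedes it below -/
import Mathlib

section
/- Let Γ be a group and V_1 ⊆ Γ^{d_1}, V_2 ⊆ Γ^{d_2} nonempty varieties over Γ, and let V = V_1 × V_2 ⊆ Γ^{d_1+d_2} (which is a variety). Let p_1, p_2 denote the two projections V → V_i, and let φ : L_{V_1} *_Γ L_{V_2} → L_V be the Γ-homomorphism induced by p_1^* : L_{V_1} → L_V and p_2^* : L_{V_2} → L_V (f ↦ f ∘ p_i) via the universal property of the amalgamated product. Then φ is surjective and its kernel equals the intersection of the kernels of all Γ-homomorphisms L_{V_1} *_Γ L_{V_2} → Γ; that is, L_V is the largest residually Γ quotient of L_{V_1} *_Γ L_{V_2}. -/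
/-- The group of `Γ`-words in `d` variables: the free product `Γ ∗ F(x₁,…,x_d)`. -/
abbrev GWord (Γ : Type) [Group Γ] (d : ℕ) : Type := Monoid.Coprod Γ (FreeGroup (Fin d))

/-- Evaluation of `Γ`-words at a point of `Γ^d`: the homomorphism which is the identity
on `Γ` and sends the `i`-th variable to `v i`. -/
def evalWord {Γ : Type} [Group Γ] {d : ℕ} (v : Fin d → Γ) : GWord Γ d →* Γ :=
  Monoid.Coprod.lift (MonoidHom.id Γ) (FreeGroup.lift v)

/-- The variety defined by a set `S` of `Γ`-words. -/
def varietyOf {Γ : Type} [Group Γ] {d : ℕ} (S : Set (GWord Γ d)) : Set (Fin d → Γ) :=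
  { v | ∀ w ∈ S, evalWord v w = 1 }

/-- A subset of `Γ^d` is a variety if it is the common zero set of a set of `Γ`-words. -/
def IsVariety {Γ : Type} [Group Γ] {d : ℕ} (V : Set (Fin d → Γ)) : Prop :=
  ∃ S : Set (GWord Γ d), V = varietyOf S

/-- The homomorphism sending a `Γ`-word to the function it defines on `V`. -/
def wordEval {Γ : Type} [Group Γ] {d : ℕ} (V : Set (Fin d → Γ)) : GWord Γ d →* (↥V → Γ) :=
  Pi.monoidHom fun v => evalWord (v : Fin d → Γ)

/-- The group `L_V` of word maps on `V`, as a subgroup of the group of all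
functions `V → Γ` (with pointwise multiplication). -/
def LV {Γ : Type} [Group Γ] {d : ℕ} (V : Set (Fin d → Γ)) : Subgroup (↥V → Γ) :=
  (wordEval V).range

/-- The constant functions, as a homomorphism `Γ →* L_V`. -/
def LV.const {Γ : Type} [Group Γ] {d : ℕ} (V : Set (Fin d → Γ)) : Γ →* ↥(LV V) :=
  (wordEval V).rangeRestrict.comp Monoid.Coprod.inl

/-- The `i`-th coordinate function, an element of `L_V`. -/
def LV.coord {Γ : Type} [Group Γ] {d : ℕ} (V : Set (Fin d → Γ)) (i : Fin d) : ↥(LV V) :=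
  (wordEval V).rangeRestrict (Monoid.Coprod.inr (FreeGroup.of i))

/-- The evaluation homomorphism `h_v : L_V →* Γ` at a point `v ∈ V`. -/
def evalAt {Γ : Type} [Group Γ] {d : ℕ} (V : Set (Fin d → Γ)) (v : ↥V) : ↥(LV V) →* Γ :=
  (Pi.evalMonoidHom (fun _ : ↥V => Γ) v).comp (LV V).subtype

/-- A family of homomorphisms `L →* Γ` is discriminating if every finite subset of `L`
is mapped injectively by some member of the family. -/
def IsDiscriminating {Γ L : Type} [Group Γ] [Group L] (H : Set (L →* Γ)) : Prop :=
  ∀ F : Finset L, ∃ h ∈ H, Set.InjOn h (F : Set L)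

/-- A nonempty variety is irreducible if whenever it is a finite union of subvarieties,
one of them is the whole variety. -/
def IsIrreducibleVariety {Γ : Type} [Group Γ] {d : ℕ} (V : Set (Fin d → Γ)) : Prop :=
  IsVariety V ∧ V.Nonempty ∧
    ∀ (n : ℕ) (W : Fin n → Set (Fin d → Γ)),
      (∀ k, IsVariety (W k)) → (∀ k, W k ⊆ V) → V = ⋃ k, W k → ∃ k, W k = V

/-- A map between varieties is algebraic if each of its coordinates is a word map. -/
def IsAlgebraicMap {Γ : Type} [Group Γ] {d d' : ℕ} (V : Set (Fin d → Γ))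
    (V' : Set (Fin d' → Γ)) (F : ↥V → ↥V') : Prop :=
  ∀ i : Fin d', ∃ w : GWord Γ d, ∀ v : ↥V, (F v : Fin d' → Γ) i = evalWord (v : Fin d → Γ) w

/-- A variety is homogeneous if its algebraic automorphisms act transitively. -/
def IsHomogeneous {Γ : Type} [Group Γ] {d : ℕ} (V : Set (Fin d → Γ)) : Prop :=
  ∀ v v' : ↥V, ∃ F : ↥V ≃ ↥V,
    IsAlgebraicMap V V ⇑F ∧ IsAlgebraicMap V V ⇑F.symm ∧ F v = v'

/-- An algebraic group over `Γ`: a nonempty variety `V ⊆ Γ^d` with a group law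
whose coordinates are word maps on `V × V`. -/
structure AlgGroup (Γ : Type) [Group Γ] (d : ℕ) where
  carrier : Set (Fin d → Γ)
  isVariety : IsVariety carrier
  mul : ↥carrier → ↥carrier → ↥carrier
  one : ↥carrier
  inv : ↥carrier → ↥carrier
  mul_assoc : ∀ a b c, mul (mul a b) c = mul a (mul b c)
  one_mul : ∀ a, mul one a = a
  mul_one : ∀ a, mul a one = a
  inv_mul : ∀ a, mul (inv a) a = one
  algebraic : ∀ i : Fin d, ∃ w : GWord Γ (d + d), ∀ a b : ↥carrier,
    (mul a b : Fin d → Γ) i = evalWord (Fin.append (a : Fin d → Γ) (b : Fin d → Γ)) w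

/-- The group structure on the points of an algebraic group. -/
instance AlgGroup.group {Γ : Type} [Group Γ] {d : ℕ} (G : AlgGroup Γ d) :
    Group ↥G.carrier where
  mul := G.mul
  one := G.one
  inv := G.inv
  mul_assoc := G.mul_assoc
  one_mul := G.one_mul
  mul_one := G.mul_one
  inv_mul_cancel := G.inv_mul

/-- The `Γ`-generating set of `L_V` consisting of the coordinate functions, their
inverses, and the nontrivial constants. -/
def LV.genSet {Γ : Type} [Group Γ] {d : ℕ} (V : Set (Fin d → Γ)) : Set ↥(LV V) :=
  {f | (∃ i, f = LV.coord V i ∨ f = (LV.coord V i)⁻¹) ∨ ∃ γ : Γ, γ ≠ 1 ∧ f = LV.const V γ}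

/-- The length of an element of `L_V`: the minimal length of a word in the coordinate
functions, their inverses, and nontrivial constants representing it. -/
noncomputable def LV.len {Γ : Type} [Group Γ] {d : ℕ} (V : Set (Fin d → Γ))
    (f : ↥(LV V)) : ℕ :=
  sInf {n | ∃ l : List ↥(LV V), l.length = n ∧ (∀ g ∈ l, g ∈ LV.genSet V) ∧ l.prod = f}
/-- The product of two subsets of `Γ^{d₁}` and `Γ^{d₂}`, as a subset of `Γ^{d₁+d₂}`. -/
def prodSet {Γ : Type} [Group Γ] {d₁ d₂ : ℕ} (V₁ : Set (Fin d₁ → Γ))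
    (V₂ : Set (Fin d₂ → Γ)) : Set (Fin (d₁ + d₂) → Γ) :=
  {v | (fun i => v (Fin.castAdd d₂ i)) ∈ V₁ ∧ (fun i => v (Fin.natAdd d₁ i)) ∈ V₂}

/-- The two-element family of groups `L_{V₁}`, `L_{V₂}`. -/
def amalgFam {Γ : Type} [Group Γ] {d₁ d₂ : ℕ} (V₁ : Set (Fin d₁ → Γ))
    (V₂ : Set (Fin d₂ → Γ)) : Bool → Type
  | true => ↥(LV V₁)
  | false => ↥(LV V₂)

instance amalgFam.group {Γ : Type} [Group Γ] {d₁ d₂ : ℕ} (V₁ : Set (Fin d₁ → Γ))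
    (V₂ : Set (Fin d₂ → Γ)) : (b : Bool) → Group (amalgFam V₁ V₂ b)
  | true => inferInstanceAs (Group ↥(LV V₁))
  | false => inferInstanceAs (Group ↥(LV V₂))

/-- The amalgamation maps `Γ →* L_{V_i}` given by the constants, so that
`Monoid.PushoutI (amalgMaps V₁ V₂)` is the amalgamated product `L_{V₁} *_Γ L_{V₂}`. -/
def amalgMaps {Γ : Type} [Group Γ] {d₁ d₂ : ℕ} (V₁ : Set (Fin d₁ → Γ))
    (V₂ : Set (Fin d₂ → Γ)) : (b : Bool) → Γ →* amalgFam V₁ V₂ b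
  | true => LV.const V₁
  | false => LV.const V₂


section Stmt4Aux

variable {Γ : Type} [Group Γ]

/-- Substitution of variables in `Γ`-words. -/
def substW {d d' : ℕ} (σ : Fin d → Fin d') : GWord Γ d →* GWord Γ d' :=
  Monoid.Coprod.lift Monoid.Coprod.inl
    (FreeGroup.lift fun i => Monoid.Coprod.inr (FreeGroup.of (σ i)))

lemma evalWord_substW {d d' : ℕ} (σ : Fin d → Fin d') (v : Fin d' → Γ) (w : GWord Γ d) :
    evalWord v (substW σ w) = evalWord (fun i => v (σ i)) w := by
  have h : (evalWord v).comp (substW (Γ := Γ) σ) = evalWord (fun i => v (σ i)) := by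
    apply Monoid.Coprod.hom_ext
    · ext γ
      simp [substW, evalWord]
    · apply FreeGroup.ext_hom
      intro i
      simp [substW, evalWord]
  exact DFunLike.congr_fun h w

variable {d₁ d₂ : ℕ} (V₁ : Set (Fin d₁ → Γ)) (V₂ : Set (Fin d₂ → Γ))

/-- First projection of the product variety. -/
def proj₁ (v : ↥(prodSet V₁ V₂)) : ↥V₁ := ⟨fun i => v.1 (Fin.castAdd d₂ i), v.2.1⟩

/-- Second projection of the product variety. -/
def proj₂ (v : ↥(prodSet V₁ V₂)) : ↥V₂ := ⟨fun i => v.1 (Fin.natAdd d₁ i), v.2.2⟩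

lemma pullback_mem₁ (x : ↥(LV V₁)) :
    (fun v => x.1 (proj₁ V₁ V₂ v)) ∈ LV (prodSet V₁ V₂) := by
  obtain ⟨w, hw⟩ := x.2
  refine ⟨substW (Fin.castAdd d₂) w, ?_⟩
  funext v
  show evalWord v.1 (substW (Fin.castAdd d₂) w) = _
  rw [evalWord_substW]
  exact congrFun hw (proj₁ V₁ V₂ v)

lemma pullback_mem₂ (x : ↥(LV V₂)) :
    (fun v => x.1 (proj₂ V₁ V₂ v)) ∈ LV (prodSet V₁ V₂) := by
  obtain ⟨w, hw⟩ := x.2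
  refine ⟨substW (Fin.natAdd d₁) w, ?_⟩
  funext v
  show evalWord v.1 (substW (Fin.natAdd d₁) w) = _
  rw [evalWord_substW]
  exact congrFun hw (proj₂ V₁ V₂ v)

/-- Pullback of word maps along the first projection. -/
def pullback₁ : ↥(LV V₁) →* ↥(LV (prodSet V₁ V₂)) where
  toFun x := ⟨fun v => x.1 (proj₁ V₁ V₂ v), pullback_mem₁ V₁ V₂ x⟩
  map_one' := rfl
  map_mul' _ _ := rfl

/-- Pullback of word maps along the second projection. -/
def pullback₂ : ↥(LV V₂) →* ↥(LV (prodSet V₁ V₂)) where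
  toFun x := ⟨fun v => x.1 (proj₂ V₁ V₂ v), pullback_mem₂ V₁ V₂ x⟩
  map_one' := rfl
  map_mul' _ _ := rfl

lemma pullback_compat :
    (pullback₁ V₁ V₂).comp (LV.const V₁) = (pullback₂ V₁ V₂).comp (LV.const V₂) := by
  ext γ v
  rfl

/-- The family of pullback maps indexed by `Bool`. -/
def pbFam : (b : Bool) → amalgFam V₁ V₂ b →* ↥(LV (prodSet V₁ V₂))
  | true => pullback₁ V₁ V₂
  | false => pullback₂ V₁ V₂

/-- The canonical map from the amalgamated product to `L_{V₁ × V₂}`. -/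
def bigPhi : Monoid.PushoutI (amalgMaps V₁ V₂) →* ↥(LV (prodSet V₁ V₂)) :=
  Monoid.PushoutI.lift (pbFam V₁ V₂) ((pullback₁ V₁ V₂).comp (LV.const V₁))
    (by
      rintro (_ | _)
      · exact (pullback_compat V₁ V₂).symm
      · rfl)

/-- Generators of the pushout corresponding to the coordinates of the product. -/
def genOf : (i : Fin (d₁ + d₂)) → Monoid.PushoutI (amalgMaps V₁ V₂) :=
  Fin.addCases
    (fun i => Monoid.PushoutI.of (φ := amalgMaps V₁ V₂) true (LV.coord V₁ i))
    (fun j => Monoid.PushoutI.of (φ := amalgMaps V₁ V₂) false (LV.coord V₂ j))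

/-- A section of `bigPhi` at the level of words. -/
def theta : GWord Γ (d₁ + d₂) →* Monoid.PushoutI (amalgMaps V₁ V₂) :=
  Monoid.Coprod.lift (Monoid.PushoutI.base (amalgMaps V₁ V₂))
    (FreeGroup.lift (genOf V₁ V₂))

lemma phi_theta :
    (bigPhi V₁ V₂).comp (theta V₁ V₂) = (wordEval (prodSet V₁ V₂)).rangeRestrict := by
  apply Monoid.Coprod.hom_ext
  · ext γ v
    have ht : theta V₁ V₂ (Monoid.Coprod.inl γ)
        = Monoid.PushoutI.base (amalgMaps V₁ V₂) γ := by simp [theta]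
    show (bigPhi V₁ V₂ (theta V₁ V₂ (Monoid.Coprod.inl γ))).1 v = _
    rw [ht, show bigPhi V₁ V₂ (Monoid.PushoutI.base (amalgMaps V₁ V₂) γ)
          = (pullback₁ V₁ V₂).comp (LV.const V₁) γ from
        Monoid.PushoutI.lift_base _ _ _ γ]
    rfl
  · apply FreeGroup.ext_hom
    intro i
    show bigPhi V₁ V₂ (theta V₁ V₂ (Monoid.Coprod.inr (FreeGroup.of i)))
        = (wordEval (prodSet V₁ V₂)).rangeRestrict (Monoid.Coprod.inr (FreeGroup.of i))
    have ht : theta V₁ V₂ (Monoid.Coprod.inr (FreeGroup.of i)) = genOf V₁ V₂ i := by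
      simp [theta]
    rw [ht]
    refine Fin.addCases (motive := fun i => bigPhi V₁ V₂ (genOf V₁ V₂ i)
        = (wordEval (prodSet V₁ V₂)).rangeRestrict (Monoid.Coprod.inr (FreeGroup.of i)))
      (fun j => ?_) (fun j => ?_) i
    · show bigPhi V₁ V₂ (genOf V₁ V₂ (Fin.castAdd d₂ j))
          = (wordEval (prodSet V₁ V₂)).rangeRestrict
              (Monoid.Coprod.inr (FreeGroup.of (Fin.castAdd d₂ j)))
      rw [show genOf V₁ V₂ (Fin.castAdd d₂ j)
          = Monoid.PushoutI.of (φ := amalgMaps V₁ V₂) true (LV.coord V₁ j) from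
        Fin.addCases_left j]
      rw [show bigPhi V₁ V₂ (Monoid.PushoutI.of (φ := amalgMaps V₁ V₂) true (LV.coord V₁ j))
          = pullback₁ V₁ V₂ (LV.coord V₁ j) from Monoid.PushoutI.lift_of _ _ _ _]
      apply Subtype.ext
      funext v
      show evalWord (proj₁ V₁ V₂ v).1 (Monoid.Coprod.inr (FreeGroup.of j))
        = evalWord v.1 (Monoid.Coprod.inr (FreeGroup.of (Fin.castAdd d₂ j)))
      simp [evalWord, proj₁]
    · show bigPhi V₁ V₂ (genOf V₁ V₂ (Fin.natAdd d₁ j))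
          = (wordEval (prodSet V₁ V₂)).rangeRestrict
              (Monoid.Coprod.inr (FreeGroup.of (Fin.natAdd d₁ j)))
      rw [show genOf V₁ V₂ (Fin.natAdd d₁ j)
          = Monoid.PushoutI.of (φ := amalgMaps V₁ V₂) false (LV.coord V₂ j) from
        Fin.addCases_right j]
      rw [show bigPhi V₁ V₂ (Monoid.PushoutI.of (φ := amalgMaps V₁ V₂) false (LV.coord V₂ j))
          = pullback₂ V₁ V₂ (LV.coord V₂ j) from Monoid.PushoutI.lift_of _ _ _ _]
      apply Subtype.ext
      funext v
      show evalWord (proj₂ V₁ V₂ v).1 (Monoid.Coprod.inr (FreeGroup.of j))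
        = evalWord v.1 (Monoid.Coprod.inr (FreeGroup.of (Fin.natAdd d₁ j)))
      simp [evalWord, proj₂]

end Stmt4Aux

/-- `L_{V₁ × V₂}` is the largest residually-`Γ` quotient of
`L_{V₁} *_Γ L_{V₂}`, via the map induced by the pullbacks of the two projections. -/
theorem stmt_4 {Γ : Type} [Group Γ] {d₁ d₂ : ℕ} (V₁ : Set (Fin d₁ → Γ))
    (V₂ : Set (Fin d₂ → Γ)) (hV₁ : IsVariety V₁) (hV₂ : IsVariety V₂)
    (hne₁ : V₁.Nonempty) (hne₂ : V₂.Nonempty) :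
    IsVariety (prodSet V₁ V₂) ∧
    ∃ φ : Monoid.PushoutI (amalgMaps V₁ V₂) →* ↥(LV (prodSet V₁ V₂)),
      (∀ f : ↥(LV V₁),
        (φ (Monoid.PushoutI.of (φ := amalgMaps V₁ V₂) true f) : ↥(prodSet V₁ V₂) → Γ) =
          fun v : ↥(prodSet V₁ V₂) => (f : ↥V₁ → Γ)
            ⟨fun i => v.1 (Fin.castAdd d₂ i), v.2.1⟩) ∧
      (∀ f : ↥(LV V₂),
        (φ (Monoid.PushoutI.of (φ := amalgMaps V₁ V₂) false f) : ↥(prodSet V₁ V₂) → Γ) =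
          fun v : ↥(prodSet V₁ V₂) => (f : ↥V₂ → Γ)
            ⟨fun i => v.1 (Fin.natAdd d₁ i), v.2.2⟩) ∧
      Function.Surjective φ ∧
      φ.ker =
        ⨅ h : {h : Monoid.PushoutI (amalgMaps V₁ V₂) →* Γ //
            ∀ γ : Γ, h (Monoid.PushoutI.base (amalgMaps V₁ V₂) γ) = γ},
          h.1.ker := by
  obtain ⟨S₁, hS₁⟩ := hV₁
  obtain ⟨S₂, hS₂⟩ := hV₂
  constructor
  · refine ⟨substW (Fin.castAdd d₂) '' S₁ ∪ substW (Fin.natAdd d₁) '' S₂, ?_⟩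
    ext v
    constructor
    · rintro ⟨h1, h2⟩ w hw
      rcases hw with ⟨s, hs, rfl⟩ | ⟨s, hs, rfl⟩
      · rw [evalWord_substW]
        rw [hS₁] at h1
        exact h1 s hs
      · rw [evalWord_substW]
        rw [hS₂] at h2
        exact h2 s hs
    · intro hv
      constructor
      · rw [hS₁]
        intro s hs
        have := hv _ (Or.inl ⟨s, hs, rfl⟩)
        rwa [evalWord_substW] at this
      · rw [hS₂]
        intro s hs
        have := hv _ (Or.inr ⟨s, hs, rfl⟩)
        rwa [evalWord_substW] at this
  refine ⟨bigPhi V₁ V₂, ?_, ?_, ?_, ?_⟩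
  · intro f
    rw [show bigPhi V₁ V₂ (Monoid.PushoutI.of (φ := amalgMaps V₁ V₂) true f)
        = pullback₁ V₁ V₂ f from Monoid.PushoutI.lift_of _ _ _ _]
    rfl
  · intro f
    rw [show bigPhi V₁ V₂ (Monoid.PushoutI.of (φ := amalgMaps V₁ V₂) false f)
        = pullback₂ V₁ V₂ f from Monoid.PushoutI.lift_of _ _ _ _]
    rfl
  · intro y
    obtain ⟨w, hw⟩ := (wordEval (prodSet V₁ V₂)).rangeRestrict_surjective y
    exact ⟨theta V₁ V₂ w, by rw [← MonoidHom.comp_apply, phi_theta]; exact hw⟩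
  · apply le_antisymm
    · refine le_iInf fun hh => ?_
      obtain ⟨h, hbase⟩ := hh
      have hiff₁ : ∀ u : Fin d₁ → Γ, u ∈ V₁ ↔ u ∈ varietyOf S₁ := fun u => by rw [hS₁]
      have hiff₂ : ∀ u : Fin d₂ → Γ, u ∈ V₂ ↔ u ∈ varietyOf S₂ := fun u => by rw [hS₂]
      have key₁ : ∀ w : GWord Γ d₁,
          h (Monoid.PushoutI.of (φ := amalgMaps V₁ V₂) true ((wordEval V₁).rangeRestrict w))
            = evalWord (fun i => h (Monoid.PushoutI.of (φ := amalgMaps V₁ V₂) true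
                (LV.coord V₁ i))) w := by
        have heq : h.comp ((Monoid.PushoutI.of (φ := amalgMaps V₁ V₂) true).comp
            (wordEval V₁).rangeRestrict)
            = evalWord (fun i => h (Monoid.PushoutI.of (φ := amalgMaps V₁ V₂) true
                (LV.coord V₁ i))) := by
          apply Monoid.Coprod.hom_ext
          · ext γ
            show h (Monoid.PushoutI.of (φ := amalgMaps V₁ V₂) true
                ((wordEval V₁).rangeRestrict (Monoid.Coprod.inl γ)))
              = (evalWord (fun i => h (Monoid.PushoutI.of (φ := amalgMaps V₁ V₂) true
                (LV.coord V₁ i)))) (Monoid.Coprod.inl γ)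
            have h1 : (wordEval V₁).rangeRestrict (Monoid.Coprod.inl γ)
                = amalgMaps V₁ V₂ true γ := rfl
            rw [h1, Monoid.PushoutI.of_apply_eq_base]
            exact hbase γ
          · apply FreeGroup.ext_hom
            intro i
            show h (Monoid.PushoutI.of (φ := amalgMaps V₁ V₂) true
                ((wordEval V₁).rangeRestrict (Monoid.Coprod.inr (FreeGroup.of i))))
              = (evalWord (fun i => h (Monoid.PushoutI.of (φ := amalgMaps V₁ V₂) true
                (LV.coord V₁ i)))) (Monoid.Coprod.inr (FreeGroup.of i))
            have h2 : evalWord (fun i => h (Monoid.PushoutI.of (φ := amalgMaps V₁ V₂) true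
                  (LV.coord V₁ i))) (Monoid.Coprod.inr (FreeGroup.of i))
                = h (Monoid.PushoutI.of (φ := amalgMaps V₁ V₂) true (LV.coord V₁ i)) := by
              simp [evalWord]
            rw [h2]
            rfl
        exact fun w => DFunLike.congr_fun heq w
      have key₂ : ∀ w : GWord Γ d₂,
          h (Monoid.PushoutI.of (φ := amalgMaps V₁ V₂) false ((wordEval V₂).rangeRestrict w))
            = evalWord (fun i => h (Monoid.PushoutI.of (φ := amalgMaps V₁ V₂) false
                (LV.coord V₂ i))) w := by
        have heq : h.comp ((Monoid.PushoutI.of (φ := amalgMaps V₁ V₂) false).comp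
            (wordEval V₂).rangeRestrict)
            = evalWord (fun i => h (Monoid.PushoutI.of (φ := amalgMaps V₁ V₂) false
                (LV.coord V₂ i))) := by
          apply Monoid.Coprod.hom_ext
          · ext γ
            show h (Monoid.PushoutI.of (φ := amalgMaps V₁ V₂) false
                ((wordEval V₂).rangeRestrict (Monoid.Coprod.inl γ)))
              = (evalWord (fun i => h (Monoid.PushoutI.of (φ := amalgMaps V₁ V₂) false
                (LV.coord V₂ i)))) (Monoid.Coprod.inl γ)
            have h1 : (wordEval V₂).rangeRestrict (Monoid.Coprod.inl γ)
                = amalgMaps V₁ V₂ false γ := rfl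
            rw [h1, Monoid.PushoutI.of_apply_eq_base]
            exact hbase γ
          · apply FreeGroup.ext_hom
            intro i
            show h (Monoid.PushoutI.of (φ := amalgMaps V₁ V₂) false
                ((wordEval V₂).rangeRestrict (Monoid.Coprod.inr (FreeGroup.of i))))
              = (evalWord (fun i => h (Monoid.PushoutI.of (φ := amalgMaps V₁ V₂) false
                (LV.coord V₂ i)))) (Monoid.Coprod.inr (FreeGroup.of i))
            have h2 : evalWord (fun i => h (Monoid.PushoutI.of (φ := amalgMaps V₁ V₂) false
                  (LV.coord V₂ i))) (Monoid.Coprod.inr (FreeGroup.of i))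
                = h (Monoid.PushoutI.of (φ := amalgMaps V₁ V₂) false (LV.coord V₂ i)) := by
              simp [evalWord]
            rw [h2]
            rfl
        exact fun w => DFunLike.congr_fun heq w
      have hv₁ : (fun i => h (Monoid.PushoutI.of (φ := amalgMaps V₁ V₂) true
          (LV.coord V₁ i))) ∈ V₁ := by
        refine (hiff₁ _).mpr ?_
        intro s hs
        have hone : (wordEval V₁).rangeRestrict s = 1 := by
          apply Subtype.ext
          show wordEval V₁ s = 1
          funext u
          exact (hiff₁ u.1).mp u.2 s hs
        have hk := key₁ s
        rw [hone] at hk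
        exact hk.symm.trans ((congrArg h
          (map_one (Monoid.PushoutI.of (φ := amalgMaps V₁ V₂) true))).trans (map_one h))
      have hv₂ : (fun i => h (Monoid.PushoutI.of (φ := amalgMaps V₁ V₂) false
          (LV.coord V₂ i))) ∈ V₂ := by
        refine (hiff₂ _).mpr ?_
        intro s hs
        have hone : (wordEval V₂).rangeRestrict s = 1 := by
          apply Subtype.ext
          show wordEval V₂ s = 1
          funext u
          exact (hiff₂ u.1).mp u.2 s hs
        have hk := key₂ s
        rw [hone] at hk
        exact hk.symm.trans ((congrArg h
          (map_one (Monoid.PushoutI.of (φ := amalgMaps V₁ V₂) false))).trans (map_one h))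
      have hv : Fin.append (fun i => h (Monoid.PushoutI.of (φ := amalgMaps V₁ V₂) true
          (LV.coord V₁ i))) (fun i => h (Monoid.PushoutI.of (φ := amalgMaps V₁ V₂) false
          (LV.coord V₂ i))) ∈ prodSet V₁ V₂ := by
        constructor
        · have he : (fun i => Fin.append (fun i => h (Monoid.PushoutI.of
              (φ := amalgMaps V₁ V₂) true (LV.coord V₁ i)))
              (fun i => h (Monoid.PushoutI.of (φ := amalgMaps V₁ V₂) false (LV.coord V₂ i)))
              (Fin.castAdd d₂ i))
              = fun i => h (Monoid.PushoutI.of (φ := amalgMaps V₁ V₂) true (LV.coord V₁ i)) :=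
            funext fun i => Fin.append_left _ _ i
          rw [he]
          exact hv₁
        · have he : (fun i => Fin.append (fun i => h (Monoid.PushoutI.of
              (φ := amalgMaps V₁ V₂) true (LV.coord V₁ i)))
              (fun i => h (Monoid.PushoutI.of (φ := amalgMaps V₁ V₂) false (LV.coord V₂ i)))
              (Fin.natAdd d₁ i))
              = fun i => h (Monoid.PushoutI.of (φ := amalgMaps V₁ V₂) false (LV.coord V₂ i)) :=
            funext fun i => Fin.append_right _ _ i
          rw [he]
          exact hv₂
      have hfac : h = (evalAt (prodSet V₁ V₂) ⟨_, hv⟩).comp (bigPhi V₁ V₂) := by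
        apply Monoid.PushoutI.hom_ext_nonempty
        rintro (_ | _)
        · ext f
          obtain ⟨w, hw⟩ := (wordEval V₂).rangeRestrict_surjective f
          show h (Monoid.PushoutI.of (φ := amalgMaps V₁ V₂) false f)
            = evalAt (prodSet V₁ V₂) ⟨_, hv⟩
                (bigPhi V₁ V₂ (Monoid.PushoutI.of (φ := amalgMaps V₁ V₂) false f))
          rw [show bigPhi V₁ V₂ (Monoid.PushoutI.of (φ := amalgMaps V₁ V₂) false f)
              = pullback₂ V₁ V₂ f from Monoid.PushoutI.lift_of _ _ _ _]
          show h (Monoid.PushoutI.of (φ := amalgMaps V₁ V₂) false f)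
            = f.1 (proj₂ V₁ V₂ ⟨_, hv⟩)
          have hproj : proj₂ V₁ V₂ ⟨_, hv⟩
              = ⟨fun i => h (Monoid.PushoutI.of (φ := amalgMaps V₁ V₂) false
                  (LV.coord V₂ i)), hv₂⟩ := by
            apply Subtype.ext
            funext i
            exact Fin.append_right (fun i => h (Monoid.PushoutI.of (φ := amalgMaps V₁ V₂) true
              (LV.coord V₁ i))) (fun i => h (Monoid.PushoutI.of (φ := amalgMaps V₁ V₂) false
              (LV.coord V₂ i))) i
          rw [hproj, ← hw, key₂ w]
          rfl
        · ext f
          obtain ⟨w, hw⟩ := (wordEval V₁).rangeRestrict_surjective f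
          show h (Monoid.PushoutI.of (φ := amalgMaps V₁ V₂) true f)
            = evalAt (prodSet V₁ V₂) ⟨_, hv⟩
                (bigPhi V₁ V₂ (Monoid.PushoutI.of (φ := amalgMaps V₁ V₂) true f))
          rw [show bigPhi V₁ V₂ (Monoid.PushoutI.of (φ := amalgMaps V₁ V₂) true f)
              = pullback₁ V₁ V₂ f from Monoid.PushoutI.lift_of _ _ _ _]
          show h (Monoid.PushoutI.of (φ := amalgMaps V₁ V₂) true f)
            = f.1 (proj₁ V₁ V₂ ⟨_, hv⟩)
          have hproj : proj₁ V₁ V₂ ⟨_, hv⟩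
              = ⟨fun i => h (Monoid.PushoutI.of (φ := amalgMaps V₁ V₂) true
                  (LV.coord V₁ i)), hv₁⟩ := by
            apply Subtype.ext
            funext i
            exact Fin.append_left (fun i => h (Monoid.PushoutI.of (φ := amalgMaps V₁ V₂) true
              (LV.coord V₁ i))) (fun i => h (Monoid.PushoutI.of (φ := amalgMaps V₁ V₂) false
              (LV.coord V₂ i))) i
          rw [hproj, ← hw, key₁ w]
          rfl
      intro x hx
      have hx1 : bigPhi V₁ V₂ x = 1 := hx
      show h x = 1
      rw [hfac]
      show evalAt (prodSet V₁ V₂) ⟨_, hv⟩ (bigPhi V₁ V₂ x) = 1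
      rw [hx1, map_one]
    · intro x hx
      show bigPhi V₁ V₂ x = 1
      apply Subtype.ext
      funext v
      have hbasev : ∀ γ : Γ, ((evalAt (prodSet V₁ V₂) v).comp (bigPhi V₁ V₂))
          (Monoid.PushoutI.base (amalgMaps V₁ V₂) γ) = γ := by
        intro γ
        show evalAt (prodSet V₁ V₂) v (bigPhi V₁ V₂ (Monoid.PushoutI.base (amalgMaps V₁ V₂) γ)) = γ
        rw [show bigPhi V₁ V₂ (Monoid.PushoutI.base (amalgMaps V₁ V₂) γ)
            = (pullback₁ V₁ V₂).comp (LV.const V₁) γ from Monoid.PushoutI.lift_base _ _ _ γ]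
        rfl
      have hm := Subgroup.mem_iInf.mp hx ⟨(evalAt (prodSet V₁ V₂) v).comp (bigPhi V₁ V₂), hbasev⟩
      exact hm
end

section
/- Let Γ be a group. If V_1 ⊆ Γ^{d_1} and V_2 ⊆ Γ^{d_2} are irreducible varieties over Γ, then the product V_1 × V_2 ⊆ Γ^{d_1+d_2} is an irreducible variety. -/
/-
Idea: a cover of `V₁ × V₂` by subvarieties `W₁, …, W_n` restricts, over each `v₁ ∈ V₁`, to a
cover of `V₂` by the slices `{v₂ | (v₁, v₂) ∈ W_k}`, which are varieties since substituting
constants for variables keeps words words. Irreducibility of `V₂` puts the whole fibre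
`{v₁} × V₂` into a single `W_k`. The sets `{v₁ | {v₁} × V₂ ⊆ W_k}` are intersections of
slices, hence varieties, and they cover `V₁`; irreducibility of `V₁` makes one of them all of
`V₁`, so that `V₁ × V₂ ⊆ W_k`.
-/

section Varieties

variable {Γ : Type} [Group Γ] {d d' : ℕ}

@[simp]
lemma evalWord_inl (v : Fin d → Γ) (γ : Γ) : evalWord v (Monoid.Coprod.inl γ) = γ :=
  Monoid.Coprod.lift_apply_inl _ _ _

@[simp]
lemma evalWord_inr_of (v : Fin d → Γ) (i : Fin d) :
    evalWord v (Monoid.Coprod.inr (FreeGroup.of i)) = v i := by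
  rw [evalWord, Monoid.Coprod.lift_apply_inr, FreeGroup.lift_apply_of]

def substWord (f : Fin d → GWord Γ d') : GWord Γ d →* GWord Γ d' :=
  Monoid.Coprod.lift Monoid.Coprod.inl (FreeGroup.lift f)

lemma evalWord_substWord (v : Fin d' → Γ) (f : Fin d → GWord Γ d') (w : GWord Γ d) :
    evalWord v (substWord f w) = evalWord (fun i => evalWord v (f i)) w := by
  have : (evalWord v).comp (substWord f) = evalWord (fun i => evalWord v (f i)) := by
    apply Monoid.Coprod.hom_ext
    · rfl
    · ext i
      simp [substWord, evalWord]
  exact DFunLike.congr_fun this w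

lemma IsVariety.iInter {ι : Sort*} {W : ι → Set (Fin d → Γ)} (hW : ∀ k, IsVariety (W k)) :
    IsVariety (⋂ k, W k) := by
  choose S hS using hW
  refine ⟨⋃ k, S k, Set.ext fun v => ?_⟩
  simp only [Set.mem_iInter, hS, varietyOf, Set.mem_ofPred_eq, Set.mem_iUnion]
  exact ⟨fun h w ⟨k, hw⟩ => h k w hw, fun h k w hw => h w ⟨k, hw⟩⟩

lemma IsVariety.inter {V W : Set (Fin d → Γ)} (hV : IsVariety V) (hW : IsVariety W) :
    IsVariety (V ∩ W) := by
  rw [Set.inter_eq_iInter]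
  exact IsVariety.iInter (Bool.forall_bool.2 ⟨hW, hV⟩)

lemma IsVariety.preimage {V : Set (Fin d → Γ)} (hV : IsVariety V)
    {φ : (Fin d' → Γ) → Fin d → Γ} (hφ : ∀ i, ∃ w : GWord Γ d', ∀ v, φ v i = evalWord v w) :
    IsVariety (φ ⁻¹' V) := by
  obtain ⟨S, rfl⟩ := hV
  choose f hf using hφ
  refine ⟨substWord f '' S, Set.ext fun v => ?_⟩
  have hφv : φ v = fun i => evalWord v (f i) := funext fun i => hf i v
  simp [varietyOf, evalWord_substWord, hφv]

variable {d₁ d₂ : ℕ}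

lemma IsVariety.preimage_append_left {W : Set (Fin (d₁ + d₂) → Γ)} (hW : IsVariety W)
    (v₁ : Fin d₁ → Γ) : IsVariety ((Fin.append v₁ ·) ⁻¹' W) :=
  hW.preimage <| Fin.addCases
    (fun i => ⟨Monoid.Coprod.inl (v₁ i), fun v => by simp⟩)
    (fun j => ⟨Monoid.Coprod.inr (FreeGroup.of j), fun v => by simp⟩)

lemma IsVariety.preimage_append_right {W : Set (Fin (d₁ + d₂) → Γ)} (hW : IsVariety W)
    (v₂ : Fin d₂ → Γ) : IsVariety ((Fin.append · v₂) ⁻¹' W) :=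
  hW.preimage <| Fin.addCases
    (fun i => ⟨Monoid.Coprod.inr (FreeGroup.of i), fun v => by simp⟩)
    (fun j => ⟨Monoid.Coprod.inl (v₂ j), fun v => by simp⟩)

lemma IsVariety.setOf_forall_append_mem {W : Set (Fin (d₁ + d₂) → Γ)} (hW : IsVariety W)
    (V₂ : Set (Fin d₂ → Γ)) : IsVariety {v₁ | ∀ v₂ ∈ V₂, Fin.append v₁ v₂ ∈ W} := by
  have : {v₁ | ∀ v₂ ∈ V₂, Fin.append v₁ v₂ ∈ W} = ⋂ v₂ ∈ V₂, (Fin.append · v₂) ⁻¹' W := by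
    ext; simp
  rw [this]
  exact IsVariety.iInter fun v₂ => IsVariety.iInter fun _ => hW.preimage_append_right v₂

lemma IsVariety.prodSet {V₁ : Set (Fin d₁ → Γ)} {V₂ : Set (Fin d₂ → Γ)}
    (h₁ : IsVariety V₁) (h₂ : IsVariety V₂) : IsVariety (prodSet V₁ V₂) :=
  (h₁.preimage (φ := fun v i => v (Fin.castAdd d₂ i))
    fun i => ⟨Monoid.Coprod.inr (FreeGroup.of (Fin.castAdd d₂ i)), by simp⟩).inter
  (h₂.preimage (φ := fun v j => v (Fin.natAdd d₁ j))
    fun j => ⟨Monoid.Coprod.inr (FreeGroup.of (Fin.natAdd d₁ j)), by simp⟩)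

lemma append_mem_prodSet {V₁ : Set (Fin d₁ → Γ)} {V₂ : Set (Fin d₂ → Γ)}
    {v₁ : Fin d₁ → Γ} {v₂ : Fin d₂ → Γ} :
    Fin.append v₁ v₂ ∈ prodSet V₁ V₂ ↔ v₁ ∈ V₁ ∧ v₂ ∈ V₂ := by
  simp [prodSet]

lemma IsIrreducibleVariety.exists_subset_of_subset_iUnion {V : Set (Fin d → Γ)}
    (hV : IsIrreducibleVariety V) {n : ℕ} {W : Fin n → Set (Fin d → Γ)}
    (hW : ∀ k, IsVariety (W k)) (hcover : V ⊆ ⋃ k, W k) : ∃ k, V ⊆ W k := by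
  obtain ⟨k, hk⟩ := hV.2.2 n (fun k => W k ∩ V) (fun k => (hW k).inter hV.1)
    (fun _ => Set.inter_subset_right)
    (by rw [← Set.iUnion_inter, Set.inter_eq_right.2 hcover])
  exact ⟨k, Set.inter_eq_right.1 hk⟩

end Varieties

/-- the product of two irreducible varieties is an irreducible variety. -/
theorem stmt_5 {Γ : Type} [Group Γ] {d₁ d₂ : ℕ} (V₁ : Set (Fin d₁ → Γ))
    (V₂ : Set (Fin d₂ → Γ)) (h₁ : IsIrreducibleVariety V₁)
    (h₂ : IsIrreducibleVariety V₂) :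
    IsIrreducibleVariety (prodSet V₁ V₂) := by
  refine ⟨h₁.1.prodSet h₂.1, ?_, fun n W hW hWsub hcover => ?_⟩
  · obtain ⟨p₁, hp₁⟩ := h₁.2.1
    obtain ⟨p₂, hp₂⟩ := h₂.2.1
    exact ⟨Fin.append p₁ p₂, append_mem_prodSet.2 ⟨hp₁, hp₂⟩⟩
  have fibre_subset : ∀ v₁ ∈ V₁, ∃ k, ∀ v₂ ∈ V₂, Fin.append v₁ v₂ ∈ W k := fun v₁ hv₁ =>
    h₂.exists_subset_of_subset_iUnion (fun k => (hW k).preimage_append_left v₁)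
      fun v₂ hv₂ => by
        have hv : Fin.append v₁ v₂ ∈ ⋃ k, W k := hcover ▸ append_mem_prodSet.2 ⟨hv₁, hv₂⟩
        obtain ⟨k, hk⟩ := Set.mem_iUnion.1 hv
        exact Set.mem_iUnion.2 ⟨k, hk⟩
  obtain ⟨k, hk⟩ := h₁.exists_subset_of_subset_iUnion
    (fun k => (hW k).setOf_forall_append_mem V₂)
    fun v₁ hv₁ => Set.mem_iUnion.2 (fibre_subset v₁ hv₁)
  refine ⟨k, (hWsub k).antisymm fun v hv => ?_⟩
  rw [← Fin.append_castAdd_natAdd (f := v)]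
  exact hk hv.1 _ hv.2
end

section
/- Let Γ be a group and V ⊆ Γ^d a nonempty variety over Γ. (i) V is irreducible if and only if the family of evaluation homomorphisms {h_v : v ∈ V} ⊆ Hom_Γ(L_V, Γ) is discriminating; equivalently (since every Γ-homomorphism L_V → Γ is an evaluation homomorphism), if and only if L_V is fully residually Γ. (ii) If V is irreducible and V_0 ⊆ V is a subset that is not contained in any finite union of proper subvarieties of V (i.e. V_0 is Zariski dense in V), then the family {h_v : v ∈ V_0} is discriminating on L_V. -/
section Aux
variable {Γ : Type} [Group Γ] {d : ℕ}

lemma evalAt_rr (V : Set (Fin d → Γ)) (v : ↥V) (w : GWord Γ d) :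
    evalAt V v ((wordEval V).rangeRestrict w) = evalWord (v : Fin d → Γ) w := rfl

lemma discr_mono {L : Type} [Group L] {H H' : Set (L →* Γ)} (hsub : H ⊆ H')
    (hd : IsDiscriminating H) : IsDiscriminating H' := by
  intro F
  obtain ⟨h, hh, hi⟩ := hd F
  exact ⟨h, hsub hh, hi⟩

lemma eval_hom_set_eq (V : Set (Fin d → Γ)) (hV : IsVariety V) :
    {h : ↥(LV V) →* Γ | ∃ v : ↥V, h = evalAt V v} =
      {h : ↥(LV V) →* Γ | ∀ γ : Γ, h (LV.const V γ) = γ} := by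
  ext h
  constructor
  · rintro ⟨v, rfl⟩
    intro γ
    rfl
  · intro hh
    obtain ⟨S, rfl⟩ := hV
    have hcomp : h.comp (wordEval (varietyOf S)).rangeRestrict
        = evalWord (fun i => h (LV.coord (varietyOf S) i)) := by
      apply Monoid.Coprod.hom_ext
      · ext γ
        exact hh γ
      · apply FreeGroup.ext_hom
        intro i
        show h (LV.coord (varietyOf S) i)
          = FreeGroup.lift (fun i => h (LV.coord (varietyOf S) i)) (FreeGroup.of i)
        rw [FreeGroup.lift_apply_of]
    have hvV : (fun i => h (LV.coord (varietyOf S) i)) ∈ varietyOf S := by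
      intro w hw
      have hR1 : (wordEval (varietyOf S)).rangeRestrict w = 1 := by
        apply Subtype.ext
        funext x
        exact x.2 w hw
      calc evalWord (fun i => h (LV.coord (varietyOf S) i)) w
          = h ((wordEval (varietyOf S)).rangeRestrict w) := (DFunLike.congr_fun hcomp w).symm
        _ = 1 := by rw [hR1]; exact map_one h
    refine ⟨⟨_, hvV⟩, ?_⟩
    ext f
    obtain ⟨w, rfl⟩ := (wordEval (varietyOf S)).rangeRestrict_surjective f
    exact DFunLike.congr_fun hcomp w

lemma dense_discr (V : Set (Fin d → Γ)) (hV : IsVariety V)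
    (V₀ : Set (Fin d → Γ)) (hsub : V₀ ⊆ V)
    (hdense : ∀ (n : ℕ) (W : Fin n → Set (Fin d → Γ)), (∀ k, IsVariety (W k)) →
        (∀ k, W k ⊆ V) → V₀ ⊆ ⋃ k, W k → ∃ k, W k = V) :
    IsDiscriminating
      {h : ↥(LV V) →* Γ | ∃ v : ↥V, (v : Fin d → Γ) ∈ V₀ ∧ h = evalAt V v} := by
  classical
  obtain ⟨S, hS⟩ := hV
  intro F
  -- choose a representing word for each element of `LV V`
  have hrep : ∀ f : ↥(LV V), ∃ w : GWord Γ d, wordEval V w = ↑f := fun f => f.2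
  choose wd hwd using hrep
  have hwd' : ∀ (f : ↥(LV V)) (x : ↥V), evalWord (x : Fin d → Γ) (wd f) = (f : ↥V → Γ) x := by
    intro f x
    exact congrFun (hwd f) x
  set P : Finset (↥(LV V) × ↥(LV V)) := (F ×ˢ F).filter (fun p => p.1 ≠ p.2) with hP
  set n := P.card with hn
  set e := P.equivFin with he
  set W : Fin n → Set (Fin d → Γ) := fun k =>
    varietyOf (S ∪ {wd ((e.symm k : ↥P) : ↥(LV V) × ↥(LV V)).1 *
      (wd ((e.symm k : ↥P) : ↥(LV V) × ↥(LV V)).2)⁻¹}) with hW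
  have hWvar : ∀ k, IsVariety (W k) := fun k => ⟨_, rfl⟩
  have hWsub : ∀ k, W k ⊆ V := by
    intro k x hx
    rw [hS]
    intro w hw
    exact hx w (Or.inl hw)
  have hWne : ∀ k, W k ≠ V := by
    intro k hk
    have hp := Finset.mem_filter.mp (e.symm k).2
    have hne' : ((((e.symm k : ↥P) : ↥(LV V) × ↥(LV V)).1 : ↥V → Γ))
        ≠ ((((e.symm k : ↥P) : ↥(LV V) × ↥(LV V)).2 : ↥V → Γ)) :=
      fun hc => hp.2 (Subtype.ext hc)
    have hex := Function.ne_iff.mp hne'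
    obtain ⟨x, hx⟩ := hex
    have hxW : (x : Fin d → Γ) ∈ W k := by rw [hk]; exact x.2
    have h2 := hxW (wd ((e.symm k : ↥P) : ↥(LV V) × ↥(LV V)).1 *
      (wd ((e.symm k : ↥P) : ↥(LV V) × ↥(LV V)).2)⁻¹) (Or.inr rfl)
    rw [map_mul, map_inv, hwd', hwd'] at h2
    exact hx (mul_inv_eq_one.mp h2)
  have hnotsub : ¬ V₀ ⊆ ⋃ k, W k := by
    intro hc
    obtain ⟨k, hk⟩ := hdense n W hWvar hWsub hc
    exact hWne k hk
  obtain ⟨x, hx₀, hxU⟩ := Set.not_subset.mp hnotsub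
  have hxV : x ∈ V := hsub hx₀
  refine ⟨evalAt V ⟨x, hxV⟩, ⟨⟨x, hxV⟩, hx₀, rfl⟩, ?_⟩
  intro f hf g hg hfg
  by_contra hne'
  have hpP : (f, g) ∈ P := Finset.mem_filter.mpr ⟨Finset.mem_product.mpr ⟨hf, hg⟩, hne'⟩
  set k := e ⟨(f, g), hpP⟩ with hk
  apply hxU
  apply Set.mem_iUnion.mpr
  refine ⟨k, ?_⟩
  intro w hw
  rcases hw with hw | hw
  · rw [hS] at hxV
    exact hxV w hw
  · have hek : e.symm k = ⟨(f, g), hpP⟩ := Equiv.symm_apply_apply _ _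
    rw [Set.mem_singleton_iff.mp hw, hek]
    rw [map_mul, map_inv, hwd' f ⟨x, hxV⟩, hwd' g ⟨x, hxV⟩]
    have : (f : ↥V → Γ) ⟨x, hxV⟩ = (g : ↥V → Γ) ⟨x, hxV⟩ := hfg
    rw [this, mul_inv_cancel]

lemma discr_irr (V : Set (Fin d → Γ)) (hV : IsVariety V) (hne : V.Nonempty)
    (hD : IsDiscriminating {h : ↥(LV V) →* Γ | ∃ v : ↥V, h = evalAt V v}) :
    IsIrreducibleVariety V := by
  classical
  refine ⟨hV, hne, fun n W hWvar hWsub hcover => ?_⟩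
  by_contra hc
  push_neg at hc
  have key : ∀ k, ∃ w : GWord Γ d, (∀ x ∈ W k, evalWord x w = 1) ∧
      ∃ x : ↥V, evalWord (x : Fin d → Γ) w ≠ 1 := by
    intro k
    obtain ⟨Sk, hSk⟩ := hWvar k
    have hnsub : ¬ V ⊆ W k := fun hsub' => hc k (le_antisymm (hWsub k) hsub')
    obtain ⟨x, hxV, hxW⟩ := Set.not_subset.mp hnsub
    rw [hSk] at hxW
    simp only [varietyOf, Set.mem_setOf_eq, not_forall] at hxW
    obtain ⟨w, hwS, hwne⟩ := hxW
    exact ⟨w, fun y hy => by rw [hSk] at hy; exact hy w hwS, ⟨⟨x, hxV⟩, hwne⟩⟩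
  choose w hw1 hw2 using key
  set f : Fin n → ↥(LV V) := fun k => (wordEval V).rangeRestrict (w k) with hf
  obtain ⟨h, ⟨v, rfl⟩, hinj⟩ := hD (insert 1 (Finset.image f Finset.univ))
  have hv : (v : Fin d → Γ) ∈ ⋃ k, W k := hcover ▸ v.2
  obtain ⟨k, hk⟩ := Set.mem_iUnion.mp hv
  have h1 : evalAt V v (f k) = 1 := hw1 k _ hk
  have hne1 : f k ≠ 1 := by
    intro hfk
    obtain ⟨x, hx⟩ := hw2 k
    exact hx (congrFun (congrArg Subtype.val hfk) x)
  apply hne1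
  apply hinj (by simp) (by simp)
  rw [h1, map_one]

end Aux

/-- a nonempty variety is irreducible iff the evaluation homomorphisms are
discriminating, iff `L_V` is fully residually `Γ`; and if `V` is irreducible, evaluations
at any Zariski-dense subset `V₀ ⊆ V` form a discriminating family. -/
theorem stmt_6 {Γ : Type} [Group Γ] {d : ℕ} (V : Set (Fin d → Γ))
    (hV : IsVariety V) (hne : V.Nonempty) :
    (IsIrreducibleVariety V ↔
      IsDiscriminating {h : ↥(LV V) →* Γ | ∃ v : ↥V, h = evalAt V v}) ∧
    (IsIrreducibleVariety V ↔
      IsDiscriminating {h : ↥(LV V) →* Γ | ∀ γ : Γ, h (LV.const V γ) = γ}) ∧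
    (IsIrreducibleVariety V → ∀ V₀ : Set (Fin d → Γ), V₀ ⊆ V →
      (∀ (n : ℕ) (W : Fin n → Set (Fin d → Γ)), (∀ k, IsVariety (W k)) →
        (∀ k, W k ⊆ V) → V₀ ⊆ ⋃ k, W k → ∃ k, W k = V) →
      IsDiscriminating
        {h : ↥(LV V) →* Γ | ∃ v : ↥V, (v : Fin d → Γ) ∈ V₀ ∧ h = evalAt V v}) := by
  have hseteq := eval_hom_set_eq V hV
  have fwd : IsIrreducibleVariety V →
      IsDiscriminating {h : ↥(LV V) →* Γ | ∃ v : ↥V, h = evalAt V v} := by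
    intro hirr
    apply discr_mono (H := {h : ↥(LV V) →* Γ | ∃ v : ↥V, (v : Fin d → Γ) ∈ V ∧ h = evalAt V v})
    · rintro h ⟨v, _, rfl⟩
      exact ⟨v, rfl⟩
    · refine dense_discr V hV V (le_refl V) ?_
      intro n W h1 h2 h3
      exact hirr.2.2 n W h1 h2 (le_antisymm h3 (Set.iUnion_subset h2))
  refine ⟨⟨fwd, discr_irr V hV hne⟩, ?_, ?_⟩
  · rw [← hseteq]
    exact ⟨fwd, discr_irr V hV hne⟩
  · intro hirr V₀ hsub hdense
    exact dense_discr V hV V₀ hsub hdense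
end

section
/- Let Γ be a group and (V, μ) an algebraic group over Γ. (i) For all h, h' ∈ Hom_Γ(L_V, Γ) there exists v ∈ V such that h' = h ∘ ρ_v^*. (ii) If moreover V is connected (i.e. the underlying variety is irreducible), then for every h ∈ Hom_Γ(L_V, Γ) the family {h ∘ ρ_v^* : v ∈ V} is a discriminating family of Γ-homomorphisms L_V → Γ. -/
/-- `Φ` is the homomorphism `ρ_v^* : L_V →* L_V`, `f ↦ f ∘ ρ_v`. -/
def IsRhoStarHom {Γ : Type} [Group Γ] {d : ℕ} (G : AlgGroup Γ d) (v : ↥G.carrier)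
    (Φ : ↥(LV G.carrier) →* ↥(LV G.carrier)) : Prop :=
  ∀ f : ↥(LV G.carrier),
    (Φ f : ↥G.carrier → Γ) = fun x => (f : ↥G.carrier → Γ) (G.mul x v)

namespace Stmt10Aux

variable {Γ : Type} [Group Γ] {d : ℕ}

lemma evalWord_inr_of (v : Fin d → Γ) (i : Fin d) :
    evalWord v (Monoid.Coprod.inr (FreeGroup.of i)) = v i := by
  unfold evalWord
  rw [Monoid.Coprod.lift_apply_inr, FreeGroup.lift_apply_of]

lemma exists_evalAt {V : Set (Fin d → Γ)} (hV : IsVariety V)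
    (h : ↥(LV V) →* Γ) (hc : ∀ γ, h (LV.const V γ) = γ) :
    ∃ v : ↥V, ∀ f : ↥(LV V), h f = (f : ↥V → Γ) v := by
  obtain ⟨S, rfl⟩ := hV
  set u : Fin d → Γ := fun i => h (LV.coord (varietyOf S) i) with hu
  have key : h.comp (wordEval (varietyOf S)).rangeRestrict = evalWord u := by
    apply Monoid.Coprod.hom_ext
    · ext γ
      exact hc γ
    · apply FreeGroup.ext_hom
      intro i
      show h (LV.coord (varietyOf S) i) = evalWord u (Monoid.Coprod.inr (FreeGroup.of i))
      rw [evalWord_inr_of]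
  have key' : ∀ w : GWord Γ d, h ((wordEval (varietyOf S)).rangeRestrict w) = evalWord u w :=
    fun w => DFunLike.congr_fun key w
  have humem : u ∈ varietyOf S := by
    intro w hw
    have h1 : (wordEval (varietyOf S)).rangeRestrict w = 1 := by
      apply Subtype.ext
      funext x
      exact x.2 w hw
    rw [← key' w, h1]
    exact map_one h
  refine ⟨⟨u, humem⟩, fun f => ?_⟩
  obtain ⟨w, hw⟩ := f.2
  have hf : f = (wordEval (varietyOf S)).rangeRestrict w := Subtype.ext hw.symm
  rw [hf, key' w]
  rfl

/-- The substitution of constants for the second block of variables. -/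
def genSub (v : Fin d → Γ) : Fin (d + d) → GWord Γ d :=
  Fin.addCases (fun j => Monoid.Coprod.inr (FreeGroup.of j))
    (fun j => Monoid.Coprod.inl (v j))

/-- Substituting the constants `v` for the second block of `d` variables. -/
def substRight (v : Fin d → Γ) : GWord Γ (d + d) →* GWord Γ d :=
  Monoid.Coprod.lift Monoid.Coprod.inl (FreeGroup.lift (genSub v))

lemma substRight_inr_of (v : Fin d → Γ) (i : Fin (d + d)) :
    substRight v (Monoid.Coprod.inr (FreeGroup.of i)) = genSub v i := by
  unfold substRight
  rw [Monoid.Coprod.lift_apply_inr, FreeGroup.lift_apply_of]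

lemma substRight_eval (v x : Fin d → Γ) (w : GWord Γ (d + d)) :
    evalWord x (substRight v w) = evalWord (Fin.append x v) w := by
  have hcomp : (evalWord x).comp (substRight v) = evalWord (Fin.append x v) := by
    apply Monoid.Coprod.hom_ext
    · rfl
    · apply FreeGroup.ext_hom
      intro i
      show evalWord x (substRight v (Monoid.Coprod.inr (FreeGroup.of i)))
          = evalWord (Fin.append x v) (Monoid.Coprod.inr (FreeGroup.of i))
      rw [substRight_inr_of, evalWord_inr_of]
      refine Fin.addCases (fun j => ?_) (fun j => ?_) i
      · rw [show genSub v (Fin.castAdd d j) = Monoid.Coprod.inr (FreeGroup.of j) from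
            Fin.addCases_left j,
          evalWord_inr_of, Fin.append_left]
      · rw [show genSub v (Fin.natAdd d j) = Monoid.Coprod.inl (v j) from
            Fin.addCases_right j,
          Fin.append_right]
        rfl
  exact DFunLike.congr_fun hcomp w

/-- Pullback along right translation by `v`, on all functions. -/
def rhoPull (G : AlgGroup Γ d) (v : ↥G.carrier) : (↥G.carrier → Γ) →* (↥G.carrier → Γ) where
  toFun f := fun x => f (G.mul x v)
  map_one' := rfl
  map_mul' _ _ := rfl

lemma exists_rhoStar (G : AlgGroup Γ d) (v : ↥G.carrier) :
    ∃ Φ : ↥(LV G.carrier) →* ↥(LV G.carrier), IsRhoStarHom G v Φ := by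
  classical
  choose wmul hwmul using G.algebraic
  let τ : GWord Γ d →* GWord Γ d :=
    Monoid.Coprod.lift Monoid.Coprod.inl
      (FreeGroup.lift (fun i => substRight (v : Fin d → Γ) (wmul i)))
  have hτval : ∀ i : Fin d,
      τ (Monoid.Coprod.inr (FreeGroup.of i)) = substRight (v : Fin d → Γ) (wmul i) := by
    intro i
    show Monoid.Coprod.lift Monoid.Coprod.inl
        (FreeGroup.lift (fun i => substRight (v : Fin d → Γ) (wmul i)))
        (Monoid.Coprod.inr (FreeGroup.of i)) = _
    rw [Monoid.Coprod.lift_apply_inr, FreeGroup.lift_apply_of]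
  have hτ : ∀ (x : ↥G.carrier) (w : GWord Γ d),
      evalWord (x : Fin d → Γ) (τ w) = evalWord ((G.mul x v : ↥G.carrier) : Fin d → Γ) w := by
    intro x w
    have hcomp : (evalWord (x : Fin d → Γ)).comp τ
        = evalWord ((G.mul x v : ↥G.carrier) : Fin d → Γ) := by
      apply Monoid.Coprod.hom_ext
      · rfl
      · apply FreeGroup.ext_hom
        intro i
        show evalWord (x : Fin d → Γ) (τ (Monoid.Coprod.inr (FreeGroup.of i)))
            = evalWord ((G.mul x v : ↥G.carrier) : Fin d → Γ)
                (Monoid.Coprod.inr (FreeGroup.of i))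
        rw [hτval, substRight_eval, ← hwmul i x v, evalWord_inr_of]
    exact DFunLike.congr_fun hcomp w
  have hmem : ∀ f : ↥(LV G.carrier),
      ((rhoPull G v).comp (LV G.carrier).subtype) f ∈ LV G.carrier := by
    rintro ⟨f, w, rfl⟩
    refine ⟨τ w, ?_⟩
    funext x
    show evalWord (x : Fin d → Γ) (τ w) = _
    rw [hτ]
    rfl
  exact ⟨MonoidHom.codRestrict ((rhoPull G v).comp (LV G.carrier).subtype) _ hmem,
    fun f => rfl⟩

end Stmt10Aux

open Stmt10Aux in
/-- (i) any two `Γ`-homomorphisms `L_V → Γ` differ by some `ρ_v^*`;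
(ii) if `V` is connected, `{h ∘ ρ_v^* : v ∈ V}` is discriminating. -/
theorem stmt_10 {Γ : Type} [Group Γ] {d : ℕ} (G : AlgGroup Γ d) :
    (∀ h h' : ↥(LV G.carrier) →* Γ,
      (∀ γ : Γ, h (LV.const G.carrier γ) = γ) →
      (∀ γ : Γ, h' (LV.const G.carrier γ) = γ) →
      ∃ (v : ↥G.carrier) (Φ : ↥(LV G.carrier) →* ↥(LV G.carrier)),
        IsRhoStarHom G v Φ ∧ h' = h.comp Φ) ∧
    (IsIrreducibleVariety G.carrier →
      ∀ h : ↥(LV G.carrier) →* Γ, (∀ γ : Γ, h (LV.const G.carrier γ) = γ) →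
        IsDiscriminating {h' : ↥(LV G.carrier) →* Γ |
          ∃ (v : ↥G.carrier) (Φ : ↥(LV G.carrier) →* ↥(LV G.carrier)),
            IsRhoStarHom G v Φ ∧ h' = h.comp Φ}) := by
  classical
  constructor
  · intro h h' hc hc'
    obtain ⟨u, hu⟩ := exists_evalAt G.isVariety h hc
    obtain ⟨u', hu'⟩ := exists_evalAt G.isVariety h' hc'
    obtain ⟨Φ, hΦ⟩ := exists_rhoStar G (G.mul (G.inv u) u')
    refine ⟨G.mul (G.inv u) u', Φ, hΦ, ?_⟩
    ext f
    rw [MonoidHom.comp_apply, hu (Φ f), hu' f, congrFun (hΦ f) u]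
    exact congrArg (f : ↥G.carrier → Γ) (mul_inv_cancel_left u u').symm
  · rintro ⟨_, _, hirr⟩ h hc
    obtain ⟨u, hu⟩ := exists_evalAt G.isVariety h hc
    intro F
    have hsep : ∃ p : ↥G.carrier, ∀ f ∈ F, ∀ g ∈ F, f ≠ g →
        (f : ↥G.carrier → Γ) p ≠ (g : ↥G.carrier → Γ) p := by
      by_contra hcon
      push_neg at hcon
      obtain ⟨S, hS⟩ := G.isVariety
      set P : Finset (↥(LV G.carrier) × ↥(LV G.carrier)) :=
        (F ×ˢ F).filter (fun q => q.1 ≠ q.2) with hP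
      have hw : ∀ q : ↥(LV G.carrier),
          ∃ w, wordEval G.carrier w = (q : ↥G.carrier → Γ) := fun q => q.2
      choose wd hwd using hw
      have hwd' : ∀ (q : ↥(LV G.carrier)) (x : ↥G.carrier),
          evalWord (x : Fin d → Γ) (wd q) = (q : ↥G.carrier → Γ) x :=
        fun q x => congrFun (hwd q) x
      let qk : Fin P.card → ↥(LV G.carrier) × ↥(LV G.carrier) :=
        fun k => (P.equivFin.symm k : ↥P)
      let W : Fin P.card → Set (Fin d → Γ) := fun k =>
        varietyOf (S ∪ {wd (qk k).1 * (wd (qk k).2)⁻¹})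
      have hWsub : ∀ k, W k ⊆ G.carrier := by
        intro k x hx
        rw [hS]
        intro w hw'
        exact hx w (Set.mem_union_left _ hw')
      have hcover : G.carrier = ⋃ k, W k := by
        apply Set.Subset.antisymm
        · intro x hx
          obtain ⟨f, hf, g, hg, hfg, heq⟩ := hcon ⟨x, hx⟩
          have hqP : (f, g) ∈ P := by
            rw [hP]
            exact Finset.mem_filter.2 ⟨Finset.mem_product.2 ⟨hf, hg⟩, hfg⟩
          refine Set.mem_iUnion.2 ⟨P.equivFin ⟨(f, g), hqP⟩, ?_⟩
          intro w hw'
          have hqk : qk (P.equivFin ⟨(f, g), hqP⟩) = (f, g) := by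
            simp [qk]
          rcases hw' with hw' | hw'
          · have hx' : x ∈ varietyOf S := by rw [← hS]; exact hx
            exact hx' w hw'
          · rw [Set.mem_singleton_iff.1 hw', hqk]
            show evalWord x (wd f * (wd g)⁻¹) = 1
            rw [map_mul, map_inv,
              show evalWord x (wd f) = (f : ↥G.carrier → Γ) ⟨x, hx⟩ from hwd' f ⟨x, hx⟩,
              show evalWord x (wd g) = (g : ↥G.carrier → Γ) ⟨x, hx⟩ from hwd' g ⟨x, hx⟩,
              heq, mul_inv_cancel]
        · exact Set.iUnion_subset hWsub
      obtain ⟨k, hk⟩ := hirr P.card W (fun k => ⟨_, rfl⟩) hWsub hcover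
      have hqP : qk k ∈ P := (P.equivFin.symm k).2
      rw [hP, Finset.mem_filter] at hqP
      apply hqP.2
      apply Subtype.ext
      funext x
      have hxW : (x : Fin d → Γ) ∈ W k := by rw [hk]; exact x.2
      have h1 : evalWord (x : Fin d → Γ) (wd (qk k).1 * (wd (qk k).2)⁻¹) = 1 :=
        hxW _ (Set.mem_union_right _ rfl)
      rw [map_mul, map_inv, hwd', hwd', mul_inv_eq_one] at h1
      exact h1
    obtain ⟨p, hp⟩ := hsep
    obtain ⟨Φ, hΦ⟩ := exists_rhoStar G (G.mul (G.inv u) p)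
    refine ⟨h.comp Φ, ⟨G.mul (G.inv u) p, Φ, hΦ, rfl⟩, ?_⟩
    intro f hf g hg heq
    by_contra hne
    apply hp f hf g hg hne
    have hval : ∀ f' : ↥(LV G.carrier),
        (h.comp Φ) f' = (f' : ↥G.carrier → Γ) p := by
      intro f'
      rw [MonoidHom.comp_apply, hu (Φ f'), congrFun (hΦ f') u]
      exact congrArg (f' : ↥G.carrier → Γ) (mul_inv_cancel_left u p)
    rw [← hval f, ← hval g, heq]
end

section
/- Let Γ be a group and V a nonempty variety over Γ. Then V is homogeneous (the group of algebraic automorphisms of V acts transitively on V) if and only if for all h, h' ∈ Hom_Γ(L_V, Γ) there exists α ∈ Aut_Γ(L_V) with h ∘ α = h'. -/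
namespace Stmt11Aux

variable {Γ : Type} [Group Γ] {d : ℕ}

lemma lv_const_val (V : Set (Fin d → Γ)) (γ : Γ) :
    ((LV.const V γ : ↥(LV V)) : ↥V → Γ) = fun _ => γ := rfl

lemma evalAt_apply (V : Set (Fin d → Γ)) (u : ↥V) (f : ↥(LV V)) :
    evalAt V u f = (f : ↥V → Γ) u := rfl

lemma evalAt_coord (V : Set (Fin d → Γ)) (u : ↥V) (i : Fin d) :
    evalAt V u (LV.coord V i) = (u : Fin d → Γ) i := by
  show evalWord (u : Fin d → Γ) (Monoid.Coprod.inr (FreeGroup.of i)) = _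
  rw [evalWord, Monoid.Coprod.lift_apply_inr, FreeGroup.lift_apply_of]

lemma evalAt_const (V : Set (Fin d → Γ)) (u : ↥V) (γ : Γ) :
    evalAt V u (LV.const V γ) = γ := rfl

lemma evalAt_rangeRestrict (V : Set (Fin d → Γ)) (u : ↥V) (w : GWord Γ d) :
    evalAt V u ((wordEval V).rangeRestrict w) = evalWord (u : Fin d → Γ) w := rfl

lemma point_ext {V : Set (Fin d → Γ)} {u u' : ↥V}
    (h : ∀ i, (u : Fin d → Γ) i = (u' : Fin d → Γ) i) : u = u' :=
  Subtype.ext (funext h)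

/-- Every Γ-homomorphism `L_V →* Γ` is evaluation at a point of `V`. -/
lemma point_of_hom (V : Set (Fin d → Γ)) (hV : IsVariety V)
    (h : ↥(LV V) →* Γ) (hc : ∀ γ : Γ, h (LV.const V γ) = γ) :
    ∃ u : ↥V, ∀ f, h f = evalAt V u f := by
  obtain ⟨S, rfl⟩ := hV
  set v : Fin d → Γ := fun i => h (LV.coord (varietyOf S) i) with hv
  have key : h.comp (wordEval (varietyOf S)).rangeRestrict = evalWord v := by
    apply Monoid.Coprod.hom_ext
    · ext γ
      exact hc γ
    · ext i
      simp only [MonoidHom.comp_apply, evalWord, Monoid.Coprod.lift_apply_inr,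
        FreeGroup.lift_apply_of]
      rfl
  have hvV : v ∈ varietyOf S := by
    intro w hw
    have h1 : (wordEval (varietyOf S)).rangeRestrict w = 1 := by
      apply Subtype.ext
      funext u
      exact u.2 w hw
    calc evalWord v w = h ((wordEval (varietyOf S)).rangeRestrict w) :=
          (DFunLike.congr_fun key w).symm
      _ = 1 := by rw [h1]; exact map_one h
  refine ⟨⟨v, hvV⟩, fun f => ?_⟩
  obtain ⟨w, rfl⟩ := (wordEval (varietyOf S)).rangeRestrict_surjective f
  rw [evalAt_rangeRestrict]
  exact DFunLike.congr_fun key w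

/-- Substitution lemma. -/
lemma evalWord_subst (v : Fin d → Γ) (ws : Fin d → GWord Γ d) (w : GWord Γ d) :
    evalWord v (Monoid.Coprod.lift Monoid.Coprod.inl (FreeGroup.lift ws) w)
      = evalWord (fun i => evalWord v (ws i)) w := by
  have : (evalWord v).comp (Monoid.Coprod.lift Monoid.Coprod.inl (FreeGroup.lift ws))
      = evalWord (fun i => evalWord v (ws i)) := by
    apply Monoid.Coprod.hom_ext
    · ext γ
      simp [evalWord]
    · ext i
      simp [evalWord]
  exact DFunLike.congr_fun this w

/-- Precomposition with an algebraic map preserves `L_V`. -/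
lemma comp_mem_LV {V : Set (Fin d → Γ)} (G : ↥V → ↥V)
    (hG : IsAlgebraicMap V V G) (f : ↥(LV V)) :
    (fun u => (f : ↥V → Γ) (G u)) ∈ LV V := by
  choose ws hws using hG
  obtain ⟨w, hw⟩ := f.2
  refine ⟨Monoid.Coprod.lift Monoid.Coprod.inl (FreeGroup.lift ws) w, ?_⟩
  funext u
  have hcoord : ((G u : ↥V) : Fin d → Γ) = fun i => evalWord (u : Fin d → Γ) (ws i) :=
    funext fun i => hws i u
  have : (f : ↥V → Γ) (G u) = evalWord ((G u : ↥V) : Fin d → Γ) w := by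
    rw [← hw]; rfl
  show evalWord (u : Fin d → Γ) (Monoid.Coprod.lift Monoid.Coprod.inl (FreeGroup.lift ws) w) = _
  rw [evalWord_subst, ← hcoord, ← this]

end Stmt11Aux

/-- `V` is homogeneous iff `Aut_Γ(L_V)` acts transitively on
`Hom_Γ(L_V, Γ)` by precomposition. -/
theorem stmt_11 {Γ : Type} [Group Γ] {d : ℕ} (V : Set (Fin d → Γ))
    (hV : IsVariety V) (hne : V.Nonempty) :
    IsHomogeneous V ↔
      ∀ h h' : ↥(LV V) →* Γ,
        (∀ γ : Γ, h (LV.const V γ) = γ) → (∀ γ : Γ, h' (LV.const V γ) = γ) →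
        ∃ α : ↥(LV V) ≃* ↥(LV V),
          (∀ γ : Γ, α (LV.const V γ) = LV.const V γ) ∧
          h.comp α.toMonoidHom = h' := by
  open Stmt11Aux in
  constructor
  · intro hHom h h' hc hc'
    obtain ⟨u, hu⟩ := point_of_hom V hV h hc
    obtain ⟨u', hu'⟩ := point_of_hom V hV h' hc'
    obtain ⟨F, hF, hFsymm, hFu⟩ := hHom u u'
    let E : ↥(LV V) ≃ ↥(LV V) :=
      { toFun := fun f => ⟨fun x => (f : ↥V → Γ) (F x), comp_mem_LV ⇑F hF f⟩
        invFun := fun f => ⟨fun x => (f : ↥V → Γ) (F.symm x),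
          comp_mem_LV ⇑F.symm hFsymm f⟩
        left_inv := fun f => Subtype.ext (funext fun x => by
          simp only [Equiv.apply_symm_apply])
        right_inv := fun f => Subtype.ext (funext fun x => by
          simp only [Equiv.symm_apply_apply]) }
    refine ⟨{ E with map_mul' := fun f g => rfl }, fun γ => rfl, ?_⟩
    ext f
    show h _ = h' f
    rw [hu, hu' f]
    show (f : ↥V → Γ) (F u) = (f : ↥V → Γ) u'
    rw [hFu]
  · intro hT v v'
    obtain ⟨α, hαc, hα⟩ := hT (evalAt V v) (evalAt V v')
      (fun γ => rfl) (fun γ => rfl)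
    have hαc' : ∀ γ : Γ, α.symm (LV.const V γ) = LV.const V γ := fun γ =>
      (MulEquiv.symm_apply_eq α).mpr (hαc γ).symm
    have hhom : ∀ (β : ↥(LV V) ≃* ↥(LV V)), (∀ γ : Γ, β (LV.const V γ) = LV.const V γ) →
        ∀ u : ↥V, ∃ u'' : ↥V, ∀ f, evalAt V u (β f) = evalAt V u'' f := fun β hβ u =>
      point_of_hom V hV ((evalAt V u).comp β.toMonoidHom)
        (fun γ => by simp only [MonoidHom.comp_apply, MulEquiv.coe_toMonoidHom,
          hβ γ, evalAt_const])
    choose G hG using hhom α hαc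
    choose G' hG' using hhom α.symm hαc'
    have hleft : ∀ u, G' (G u) = u := by
      intro u
      refine (point_ext fun i => ?_).symm
      have h1 := hG u (α.symm (LV.coord V i))
      rw [MulEquiv.apply_symm_apply] at h1
      have h2 := hG' (G u) (LV.coord V i)
      rw [← evalAt_coord V (G' (G u)) i, ← h2, ← h1, evalAt_coord]
    have hright : ∀ u, G (G' u) = u := by
      intro u
      refine (point_ext fun i => ?_).symm
      have h1 := hG' u (α (LV.coord V i))
      rw [MulEquiv.symm_apply_apply] at h1
      have h2 := hG (G' u) (LV.coord V i)
      rw [← evalAt_coord V (G (G' u)) i, ← h2, ← h1, evalAt_coord]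
    have halgG : IsAlgebraicMap V V G := by
      intro i
      obtain ⟨w, hw⟩ := (α (LV.coord V i)).2
      refine ⟨w, fun u => ?_⟩
      have h1 := hG u (LV.coord V i)
      rw [evalAt_coord] at h1
      rw [← h1, evalAt_apply, ← hw]
      rfl
    have halgG' : IsAlgebraicMap V V G' := by
      intro i
      obtain ⟨w, hw⟩ := (α.symm (LV.coord V i)).2
      refine ⟨w, fun u => ?_⟩
      have h1 := hG' u (LV.coord V i)
      rw [evalAt_coord] at h1
      rw [← h1, evalAt_apply, ← hw]
      rfl
    refine ⟨⟨G, G', hleft, hright⟩, halgG, halgG', ?_⟩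
    refine point_ext fun i => ?_
    have h1 := hG v (LV.coord V i)
    have h2 := DFunLike.congr_fun hα (LV.coord V i)
    simp only [MonoidHom.comp_apply, MulEquiv.coe_toMonoidHom] at h2
    show (G v : Fin d → Γ) i = (v' : Fin d → Γ) i
    rw [← evalAt_coord V (G v) i, ← h1, h2, evalAt_coord]
end

section
/- Let Γ be a group, V a nonempty variety over Γ, h ∈ Hom_Γ(L_V, Γ), and M a subgroup of Aut_Γ(L_V) such that the family {h ∘ α : α ∈ M} is discriminating. Then for any finite index subgroup M_0 of M, the subfamily {h ∘ α : α ∈ M_0} is still discriminating. -/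
/-- if `{h ∘ α : α ∈ M}` is discriminating for a subgroup
`M ≤ Aut_Γ(L_V)`, then so is `{h ∘ α : α ∈ M₀}` for any finite index subgroup `M₀ ≤ M`. -/
theorem stmt_13 {Γ : Type} [Group Γ] {d : ℕ} (V : Set (Fin d → Γ))
    (hV : IsVariety V) (hne : V.Nonempty)
    (h : ↥(LV V) →* Γ) (hh : ∀ γ : Γ, h (LV.const V γ) = γ)
    (M M₀ : Subgroup (MulAut ↥(LV V)))
    (hM : ∀ α ∈ M, ∀ γ : Γ, α (LV.const V γ) = LV.const V γ)
    (hdisc : IsDiscriminating {h' : ↥(LV V) →* Γ |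
      ∃ α ∈ M, h' = h.comp (MulEquiv.toMonoidHom α)})
    (hle : M₀ ≤ M) (hfi : M₀.relIndex M ≠ 0) :
    IsDiscriminating {h' : ↥(LV V) →* Γ |
      ∃ α ∈ M₀, h' = h.comp (MulEquiv.toMonoidHom α)} := by
  classical
  intro F
  set N := M₀.subgroupOf M with hN
  have hfin : Finite (↥M ⧸ N) := Nat.finite_of_card_ne_zero hfi
  haveI := Fintype.ofFinite (↥M ⧸ N)
  set F' : Finset ↥(LV V) :=
    Finset.univ.biUnion (fun q : ↥M ⧸ N =>
      F.image (fun x => ((Quotient.out q : ↥M) : MulAut ↥(LV V)) x)) with hF'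
  obtain ⟨h', ⟨α, hαM, rfl⟩, hinj⟩ := hdisc F'
  set a : ↥M := ⟨α, hαM⟩ with ha
  set β : ↥M := Quotient.out (QuotientGroup.mk a⁻¹ : ↥M ⧸ N) with hβdef
  have hβ : (QuotientGroup.mk β : ↥M ⧸ N) = QuotientGroup.mk a⁻¹ :=
    QuotientGroup.out_eq' _
  have hn : β⁻¹ * a⁻¹ ∈ N := QuotientGroup.eq.mp hβ
  have hm : a * β ∈ N := by
    have := inv_mem hn
    simpa using this
  have hmem : ((a * β : ↥M) : MulAut ↥(LV V)) ∈ M₀ :=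
    Subgroup.mem_subgroupOf.mp hm
  refine ⟨h.comp (MulEquiv.toMonoidHom ((a * β : ↥M) : MulAut ↥(LV V))),
    ⟨_, hmem, rfl⟩, ?_⟩
  intro x hx y hy hxy
  have hap : ∀ z, ((a * β : ↥M) : MulAut ↥(LV V)) z = α ((β : MulAut ↥(LV V)) z) := by
    intro z; rfl
  have hmemF' : ∀ z ∈ F, (β : MulAut ↥(LV V)) z ∈ F' := by
    intro z hz
    rw [hF']
    refine Finset.mem_biUnion.mpr ⟨QuotientGroup.mk a⁻¹, Finset.mem_univ _, ?_⟩
    exact Finset.mem_image.mpr ⟨z, hz, rfl⟩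
  have hxy' : h (α ((β : MulAut ↥(LV V)) x)) = h (α ((β : MulAut ↥(LV V)) y)) := by
    simpa [hap] using hxy
  have := hinj (hmemF' x hx) (hmemF' y hy) hxy'
  exact (β : MulAut ↥(LV V)).injective this
end

section
/- Let Γ be a group, (G, ⊛) an algebraic group over Γ with G ⊆ Γ^n, and X ⊆ Γ^p a nonempty variety, and suppose G acts algebraically on X (the action map G × X → X is an algebraic map and is a group action). Then there exists a constant C > 0 such that for all g ∈ G and all f ∈ L_X, ℓ(τ_g^*(f)) ≤ C · ℓ(f), where ℓ is the length on L_X with respect to the Γ-generating set given by the coordinate functions X_1,…,X_p, and τ_g^*(f) = f ∘ τ_g with τ_g : X → X, x ↦ g·x. Equivalently, the stretch Lip(τ_g^*) = sup_{f ≠ 1} ℓ(τ_g^*(f))/ℓ(f) is bounded by C uniformly in g ∈ G. -/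
/-- An algebraic action of an algebraic group `G` on a variety `X`: a group action
whose coordinates are word maps in the coordinates of `G` and `X`. -/
structure AlgAction {Γ : Type} [Group Γ] {n p : ℕ} (G : AlgGroup Γ n)
    (X : Set (Fin p → Γ)) where
  act : ↥G.carrier → ↥X → ↥X
  one_act : ∀ x, act G.one x = x
  mul_act : ∀ g g' x, act (G.mul g g') x = act g (act g' x)
  algebraic : ∀ i : Fin p, ∃ w : GWord Γ (n + p), ∀ (g : ↥G.carrier) (x : ↥X),
    (act g x : Fin p → Γ) i = evalWord (Fin.append (g : Fin n → Γ) (x : Fin p → Γ)) w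

section Aux

variable {Γ : Type} [Group Γ] {d : ℕ} (V : Set (Fin d → Γ))

lemma aux_exists_list_rr (u : GWord Γ d) :
    ∃ l : List ↥(LV V), (∀ g ∈ l, g ∈ LV.genSet V) ∧
      l.prod = (wordEval V).rangeRestrict u := by
  induction u using Monoid.Coprod.induction_on with
  | inl γ =>
    by_cases hγ : γ = 1
    · exact ⟨[], by simp, by simp [hγ]; rfl⟩
    · refine ⟨[(wordEval V).rangeRestrict (Monoid.Coprod.inl γ)], ?_, by exact List.prod_singleton⟩
      intro t ht
      replace ht := List.mem_singleton.mp ht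
      subst ht
      exact Or.inr ⟨γ, hγ, rfl⟩
  | inr v =>
    induction v using FreeGroup.induction_on with
    | C1 => exact ⟨[], by simp, by simp; rfl⟩
    | of i =>
      refine ⟨[LV.coord V i], ?_, by exact List.prod_singleton⟩
      intro t ht
      simp only [List.mem_singleton] at ht
      subst ht
      exact Or.inl ⟨i, Or.inl rfl⟩
    | inv_of i _ =>
      refine ⟨[(LV.coord V i)⁻¹], ?_, ?_⟩
      · intro t ht
        simp only [List.mem_singleton] at ht
        subst ht
        exact Or.inl ⟨i, Or.inr rfl⟩
      · rw [List.prod_singleton,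
          map_inv, map_inv]
        rfl
    | mul a b ha hb =>
      obtain ⟨l1, h1, h1p⟩ := ha
      obtain ⟨l2, h2, h2p⟩ := hb
      refine ⟨l1 ++ l2, ?_, ?_⟩
      · intro t ht
        rcases List.mem_append.mp ht with h | h
        · exact h1 t h
        · exact h2 t h
      · rw [List.prod_append, h1p, h2p, map_mul, map_mul]
        rfl
  | mul a b ha hb =>
    obtain ⟨l1, h1, h1p⟩ := ha
    obtain ⟨l2, h2, h2p⟩ := hb
    refine ⟨l1 ++ l2, ?_, ?_⟩
    · intro t ht
      rcases List.mem_append.mp ht with h | h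
      · exact h1 t h
      · exact h2 t h
    · rw [List.prod_append, h1p, h2p, map_mul]
      rfl

lemma aux_len_le (f : ↥(LV V)) (l : List ↥(LV V)) (hgen : ∀ g ∈ l, g ∈ LV.genSet V)
    (hprod : l.prod = f) : LV.len V f ≤ l.length :=
  Nat.sInf_le ⟨l, rfl, hgen, hprod⟩

lemma aux_len_spec (f : ↥(LV V)) :
    ∃ l : List ↥(LV V), l.length = LV.len V f ∧ (∀ g ∈ l, g ∈ LV.genSet V) ∧
      l.prod = f := by
  obtain ⟨u, hu⟩ := f.2
  have hf : (wordEval V).rangeRestrict u = f := Subtype.ext hu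
  obtain ⟨l, h1, h2⟩ := aux_exists_list_rr V u
  exact Nat.sInf_mem (⟨l.length, ⟨l, rfl, h1, h2.trans hf⟩⟩ :
    Set.Nonempty {n | ∃ l : List ↥(LV V), l.length = n ∧ (∀ g ∈ l, g ∈ LV.genSet V) ∧ l.prod = f})

lemma aux_genSet_inv {f : ↥(LV V)} (h : f ∈ LV.genSet V) : f⁻¹ ∈ LV.genSet V := by
  rcases h with ⟨i, hi | hi⟩ | ⟨γ, hγ, hc⟩
  · exact Or.inl ⟨i, Or.inr (by rw [hi])⟩
  · exact Or.inl ⟨i, Or.inl (by rw [hi, inv_inv])⟩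
  · exact Or.inr ⟨γ⁻¹, inv_ne_one.mpr hγ, by rw [hc, ← map_inv]⟩

lemma aux_len_inv (f : ↥(LV V)) : LV.len V f⁻¹ ≤ LV.len V f := by
  obtain ⟨l, hlen, hgen, hprod⟩ := aux_len_spec V f
  have hle := aux_len_le V f⁻¹ ((l.map (·⁻¹)).reverse) ?_ ?_
  · simpa [hlen] using hle
  · intro t ht
    simp only [List.mem_reverse, List.mem_map] at ht
    obtain ⟨a, ha, rfl⟩ := ht
    exact aux_genSet_inv V (hgen a ha)
  · rw [← List.prod_inv_reverse, hprod]

lemma aux_len_mul (f g : ↥(LV V)) : LV.len V (f * g) ≤ LV.len V f + LV.len V g := by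
  obtain ⟨l1, h1len, h1gen, h1prod⟩ := aux_len_spec V f
  obtain ⟨l2, h2len, h2gen, h2prod⟩ := aux_len_spec V g
  have hle := aux_len_le V (f * g) (l1 ++ l2) ?_ ?_
  · simpa [h1len, h2len] using hle
  · intro t ht
    rcases List.mem_append.mp ht with h | h
    · exact h1gen t h
    · exact h2gen t h
  · rw [List.prod_append, h1prod, h2prod]

lemma aux_len_one : LV.len V 1 = 0 :=
  Nat.le_zero.mp (aux_len_le V 1 [] (by simp) (by simp))

lemma aux_len_prod (C : ℕ) (l : List ↥(LV V)) (h : ∀ t ∈ l, LV.len V t ≤ C) :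
    LV.len V l.prod ≤ C * l.length := by
  induction l with
  | nil => simp [aux_len_one]
  | cons a l ih =>
    rw [List.prod_cons]
    calc LV.len V (a * l.prod) ≤ LV.len V a + LV.len V l.prod := aux_len_mul V _ _
      _ ≤ C + C * l.length := by
          exact add_le_add (h a List.mem_cons_self)
            (ih fun t ht => h t (List.mem_cons_of_mem a ht))
      _ = C * (l.length + 1) := by ring
      _ = C * (a :: l).length := by simp

lemma aux_len_constRR (γ : Γ) :
    LV.len V ((wordEval V).rangeRestrict (Monoid.Coprod.inl γ)) ≤ 1 := by
  by_cases hγ : γ = 1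
  · subst hγ
    have h0 : ((wordEval V).rangeRestrict (Monoid.Coprod.inl (1 : Γ))) = 1 := by
      simp
    rw [h0]
    exact (aux_len_one V).trans_le (Nat.zero_le 1)
  · refine le_trans (aux_len_le V _ [(wordEval V).rangeRestrict (Monoid.Coprod.inl γ)]
      ?_ (by exact List.prod_singleton)) (le_of_eq rfl)
    intro t ht
    replace ht := List.mem_singleton.mp ht
    subst ht
    exact Or.inr ⟨γ, hγ, rfl⟩

lemma aux_len_coord (i : Fin d) : LV.len V (LV.coord V i) ≤ 1 := by
  refine le_trans (aux_len_le V _ [LV.coord V i] ?_ (by simp)) (by simp)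
  intro t ht
  simp only [List.mem_singleton] at ht
  subst ht
  exact Or.inl ⟨i, Or.inl rfl⟩

end Aux

/-- Substitution of constants for the first `n` variables. -/
def substG {Γ : Type} [Group Γ] {n p : ℕ} (g : Fin n → Γ) :
    GWord Γ (n + p) →* GWord Γ p :=
  Monoid.Coprod.lift Monoid.Coprod.inl
    (FreeGroup.lift (Fin.addCases (fun i => Monoid.Coprod.inl (g i))
      (fun j => Monoid.Coprod.inr (FreeGroup.of j))))

lemma substG_eval {Γ : Type} [Group Γ] {n p : ℕ} (g : Fin n → Γ) (x : Fin p → Γ)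
    (u : GWord Γ (n + p)) :
    evalWord (Fin.append g x) u = evalWord x (substG g u) := by
  induction u using Monoid.Coprod.induction_on with
  | inl γ => simp [substG, evalWord]
  | inr v =>
    induction v using FreeGroup.induction_on with
    | C1 => simp
    | of i =>
      simp only [substG, evalWord, Monoid.Coprod.lift_apply_inr, FreeGroup.lift_apply_of]
      refine Fin.addCases (motive := fun i => Fin.append g x i =
        Monoid.Coprod.lift (MonoidHom.id Γ) (FreeGroup.lift x)
          (Fin.addCases (fun i => Monoid.Coprod.inl (g i))
            (fun j => Monoid.Coprod.inr (FreeGroup.of j)) i)) (fun i0 => ?_) (fun j0 => ?_) i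
      · simp [Fin.addCases_left, Fin.append_left]
      · simp [Fin.addCases_right, Fin.append_right]
    | inv_of i h => simpa only [map_inv, inv_inj] using h
    | mul a b ha hb => simp only [map_mul, ha, hb]
  | mul a b ha hb => simp only [map_mul, ha, hb]

/-- bounded stretch: if an algebraic group `G` acts algebraically on a
variety `X`, there is `C > 0` with `ℓ(τ_g^*(f)) ≤ C·ℓ(f)` for all `g ∈ G`, `f ∈ L_X`. -/
theorem stmt_16 {Γ : Type} [Group Γ] {n p : ℕ} (G : AlgGroup Γ n)
    (X : Set (Fin p → Γ)) (hX : IsVariety X) (hXne : X.Nonempty)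
    (A : AlgAction G X) :
    ∃ C : ℕ, 0 < C ∧ ∀ (g : ↥G.carrier) (f fg : ↥(LV X)),
      ((fg : ↥X → Γ) = fun x => (f : ↥X → Γ) (A.act g x)) →
      LV.len X fg ≤ C * LV.len X f := by
  classical
  choose w hw using A.algebraic
  -- Uniform bound on the length of substituted words
  have hbound : ∀ u : GWord Γ (n + p), ∃ N : ℕ, ∀ g : Fin n → Γ,
      LV.len X ((wordEval X).rangeRestrict (substG g u)) ≤ N := by
    intro u
    induction u using Monoid.Coprod.induction_on with
    | inl γ =>
      refine ⟨1, fun g => ?_⟩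
      have h1 : substG (p := p) g (Monoid.Coprod.inl γ) = Monoid.Coprod.inl γ := by
        simp [substG]
      rw [h1]
      exact aux_len_constRR X γ
    | inr v =>
      induction v using FreeGroup.induction_on with
      | C1 => exact ⟨0, fun g => by simp; exact aux_len_one X⟩
      | of i =>
        refine ⟨1, fun g => ?_⟩
        have h1 : substG (p := p) g (Monoid.Coprod.inr (FreeGroup.of i)) =
            Fin.addCases (fun i => Monoid.Coprod.inl (g i))
              (fun j => Monoid.Coprod.inr (FreeGroup.of j)) i := by
          simp [substG]
        rw [h1]
        refine Fin.addCases (motive := fun i => LV.len X ((wordEval X).rangeRestrict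
          (Fin.addCases (fun i => Monoid.Coprod.inl (g i))
            (fun j => Monoid.Coprod.inr (FreeGroup.of j)) i)) ≤ 1)
          (fun i0 => ?_) (fun j0 => ?_) i
        · simp only [Fin.addCases_left]
          exact aux_len_constRR X (g i0)
        · simp only [Fin.addCases_right]
          exact aux_len_coord X j0
      | inv_of i h =>
        obtain ⟨N, hN⟩ := h
        refine ⟨N, fun g => ?_⟩
        simp only [map_inv]
        exact le_trans (aux_len_inv X _) (hN g)
      | mul a b ha hb =>
        obtain ⟨N1, h1⟩ := ha
        obtain ⟨N2, h2⟩ := hb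
        refine ⟨N1 + N2, fun g => ?_⟩
        simp only [map_mul]
        exact le_trans (aux_len_mul X _ _) (add_le_add (h1 g) (h2 g))
    | mul a b ha hb =>
      obtain ⟨N1, h1⟩ := ha
      obtain ⟨N2, h2⟩ := hb
      refine ⟨N1 + N2, fun g => ?_⟩
      simp only [map_mul]
      exact le_trans (aux_len_mul X _ _) (add_le_add (h1 g) (h2 g))
  choose N hN using fun i => hbound (w i)
  refine ⟨1 + Finset.univ.sup N, by omega, ?_⟩
  set C := 1 + Finset.univ.sup N with hC
  have hNC : ∀ i, N i ≤ C := fun i =>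
    le_trans (Finset.le_sup (Finset.mem_univ i)) (Nat.le_add_left _ 1)
  have h1C : 1 ≤ C := Nat.le_add_right 1 _
  intro g f fg hfg
  obtain ⟨l, hlen, hgen, hprod⟩ := aux_len_spec X f
  -- the pullback homomorphism
  set Φ : (↥X → Γ) →* (↥X → Γ) :=
    { toFun := fun h x => h (A.act g x)
      map_one' := rfl
      map_mul' := fun a b => rfl } with hΦ
  have key : ∀ s ∈ LV.genSet X, ∃ t : ↥(LV X), LV.len X t ≤ C ∧
      (t : ↥X → Γ) = Φ (s : ↥X → Γ) := by
    have hcoord : ∀ i : Fin p,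
        (((wordEval X).rangeRestrict (substG (g : Fin n → Γ) (w i)) : ↥(LV X)) : ↥X → Γ)
          = Φ ((LV.coord X i : ↥(LV X)) : ↥X → Γ) := by
      intro i
      funext x
      have h1 : (((wordEval X).rangeRestrict (substG (g : Fin n → Γ) (w i))
          : ↥(LV X)) : ↥X → Γ) x = evalWord (x : Fin p → Γ) (substG (g : Fin n → Γ) (w i)) := by
        rw [MonoidHom.coe_rangeRestrict]
        rfl
      have h2 : Φ ((LV.coord X i : ↥(LV X)) : ↥X → Γ) x
          = (A.act g x : Fin p → Γ) i := by
        simp only [hΦ, MonoidHom.coe_mk, OneHom.coe_mk, LV.coord,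
          MonoidHom.coe_rangeRestrict]
        show evalWord ((A.act g x : ↥X) : Fin p → Γ) (Monoid.Coprod.inr (FreeGroup.of i))
          = (A.act g x : Fin p → Γ) i
        simp [evalWord]
      rw [h1, h2, hw i g x, substG_eval]
    intro s hs
    rcases hs with ⟨i, hi | hi⟩ | ⟨γ, hγ, hc⟩
    · refine ⟨(wordEval X).rangeRestrict (substG (g : Fin n → Γ) (w i)),
        le_trans (hN i g) (hNC i), ?_⟩
      rw [hi]
      exact hcoord i
    · refine ⟨((wordEval X).rangeRestrict (substG (g : Fin n → Γ) (w i)))⁻¹,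
        le_trans (aux_len_inv X _) (le_trans (hN i g) (hNC i)), ?_⟩
      rw [hi]
      have := hcoord i
      calc ((((wordEval X).rangeRestrict (substG (g : Fin n → Γ) (w i)))⁻¹ : ↥(LV X))
            : ↥X → Γ)
          = (((wordEval X).rangeRestrict (substG (g : Fin n → Γ) (w i)) : ↥(LV X))
            : ↥X → Γ)⁻¹ := by
            rfl
        _ = (Φ ((LV.coord X i : ↥(LV X)) : ↥X → Γ))⁻¹ := by rw [this]
        _ = Φ (((LV.coord X i : ↥(LV X)) : ↥X → Γ))⁻¹ := by rw [map_inv]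
        _ = Φ (((LV.coord X i)⁻¹ : ↥(LV X)) : ↥X → Γ) := by
            congr 1
    · refine ⟨s, ?_, ?_⟩
      · rw [hc]
        exact le_trans (aux_len_constRR X γ) h1C
      · funext x
        rw [hc]
        show (LV.const X γ : ↥X → Γ) x = (LV.const X γ : ↥X → Γ) (A.act g x)
        simp only [LV.const, MonoidHom.comp_apply, MonoidHom.coe_rangeRestrict]
        show evalWord (x : Fin p → Γ) (Monoid.Coprod.inl γ)
          = evalWord ((A.act g x : ↥X) : Fin p → Γ) (Monoid.Coprod.inl γ)
        simp [evalWord]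
  -- lift the minimal word for f to a word for fg
  have hlist : ∀ l : List ↥(LV X), (∀ s ∈ l, s ∈ LV.genSet X) →
      ∃ l' : List ↥(LV X), l'.length = l.length ∧ (∀ t ∈ l', LV.len X t ≤ C) ∧
        ((l'.prod : ↥(LV X)) : ↥X → Γ) = Φ ((l.prod : ↥(LV X)) : ↥X → Γ) := by
    intro l
    induction l with
    | nil => exact fun _ => ⟨[], rfl, by simp, by simp⟩
    | cons s l ih =>
      intro hsl
      obtain ⟨t, htC, hts⟩ := key s (hsl s List.mem_cons_self)
      obtain ⟨l', hl'len, hl'C, hl'prod⟩ := ih fun a ha => hsl a (List.mem_cons_of_mem s ha)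
      refine ⟨t :: l', by simp [hl'len], ?_, ?_⟩
      · intro a ha
        rcases List.mem_cons.mp ha with rfl | ha
        · exact htC
        · exact hl'C a ha
      · simp only [List.prod_cons, MulMemClass.coe_mul, map_mul, hts, hl'prod]
  obtain ⟨l', hl'len, hl'C, hl'prod⟩ := hlist l hgen
  have hfg2 : fg = l'.prod := by
    apply Subtype.ext
    rw [hfg, hl'prod, hprod]
    rfl
  rw [hfg2]
  calc LV.len X l'.prod ≤ C * l'.length := aux_len_prod X C l' hl'C
    _ = C * LV.len X f := by rw [hl'len, hlen]
end

section
/- Let Γ be a group, (G, ⊛) an algebraic group over Γ with G ⊆ Γ^n, and X ⊆ Γ^p a nonempty variety on which G acts algebraically (the action map G × X → X is an algebraic map and is a group action). Suppose L_X acts by isometries on a metric space Y in such a way that the constants subgroup Γ ⊆ L_X has bounded orbits. Then there exists a constant K such that for all f ∈ L_X and all g ∈ G, the translation length satisfies ||τ_g^*(f)||_Y ≤ K · ℓ(f), where τ_g^*(f) = f ∘ τ_g with τ_g : X → X, x ↦ g·x, and ℓ is the length on L_X with respect to the coordinate functions X_1,…,X_p. -/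
section Stmt17Aux

variable {Γ : Type} [Group Γ] {n p : ℕ}

lemma stmt17_const_apply (X : Set (Fin p → Γ)) (γ : Γ) (v : ↥X) :
    ((LV.const X γ : ↥(LV X)) : ↥X → Γ) v = γ := by
  show evalWord (v : Fin p → Γ) (Monoid.Coprod.inl γ) = γ
  simp [evalWord]

lemma stmt17_coord_apply (X : Set (Fin p → Γ)) (i : Fin p) (v : ↥X) :
    ((LV.coord X i : ↥(LV X)) : ↥X → Γ) v = (v : Fin p → Γ) i := by
  show evalWord (v : Fin p → Γ) (Monoid.Coprod.inr (FreeGroup.of i)) = _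
  simp [evalWord]

/-- Substitution of the coordinates of `g` for the first `n` variables and the coordinate
functions for the last `p` variables. -/
noncomputable def stmt17Phi (X : Set (Fin p → Γ)) (g : Fin n → Γ) :
    GWord Γ (n + p) →* ↥(LV X) :=
  Monoid.Coprod.lift (LV.const X)
    (FreeGroup.lift fun j =>
      Fin.addCases (motive := fun _ => ↥(LV X)) (fun k => LV.const X (g k))
        (fun k => LV.coord X k) j)

lemma stmt17Phi_apply (X : Set (Fin p → Γ)) (g : Fin n → Γ) (w : GWord Γ (n + p)) (v : ↥X) :
    ((stmt17Phi X g w : ↥(LV X)) : ↥X → Γ) v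
      = evalWord (Fin.append g (v : Fin p → Γ)) w := by
  have h : (LV X).subtype.comp (stmt17Phi X g)
      = Pi.monoidHom fun v : ↥X => evalWord (Fin.append g (v : Fin p → Γ)) := by
    apply Monoid.Coprod.hom_ext
    · refine MonoidHom.ext fun γ => funext fun v => ?_
      simpa [stmt17Phi, evalWord, Pi.monoidHom, MonoidHom.pi_apply] using stmt17_const_apply X γ v
    · refine FreeGroup.ext_hom _ _ fun j => funext fun v => ?_
      induction j using Fin.addCases with
      | left k =>
        simpa [stmt17Phi, evalWord, Fin.append_left, Pi.monoidHom, MonoidHom.pi_apply] using stmt17_const_apply X (g k) v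
      | right k =>
        simpa [stmt17Phi, evalWord, Fin.append_right, Pi.monoidHom, MonoidHom.pi_apply] using stmt17_coord_apply X k v
  exact congrFun (DFunLike.congr_fun h w) v

end Stmt17Aux

set_option maxHeartbeats 1000000 in
/-- if `L_X` acts by isometries on a metric space `Y` with `Γ` having
bounded orbits, then there is `K` with `‖τ_g^*(f)‖_Y ≤ K·ℓ(f)` for all `g ∈ G`, `f ∈ L_X`. -/
theorem stmt_17 {Γ : Type} [Group Γ] {n p : ℕ} (G : AlgGroup Γ n)
    (X : Set (Fin p → Γ)) (hX : IsVariety X) (hXne : X.Nonempty)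
    (A : AlgAction G X)
    (Y : Type) [MetricSpace Y] [MulAction ↥(LV X) Y]
    (hiso : ∀ f : ↥(LV X), Isometry fun y : Y => f • y)
    (hbdd : ∀ y : Y, Bornology.IsBounded (Set.range fun γ : Γ => LV.const X γ • y)) :
    ∃ K : ℝ, ∀ (g : ↥G.carrier) (f fg : ↥(LV X)),
      ((fg : ↥X → Γ) = fun x => (f : ↥X → Γ) (A.act g x)) →
      (⨅ y : Y, dist y (fg • y)) ≤ K * (LV.len X f : ℝ) := by
  classical
  rcases isEmpty_or_nonempty Y with hY | hY
  · refine ⟨0, fun g f fg hfg => ?_⟩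
    rw [iInf_of_isEmpty, Real.sInf_empty, zero_mul]
  obtain ⟨y₀⟩ := hY
  -- basic displacement lemmas
  have disp_mul : ∀ a b : ↥(LV X), dist y₀ ((a * b) • y₀)
      ≤ dist y₀ (a • y₀) + dist y₀ (b • y₀) := by
    intro a b
    calc dist y₀ ((a * b) • y₀) = dist y₀ (a • (b • y₀)) := by rw [mul_smul]
      _ ≤ dist y₀ (a • y₀) + dist (a • y₀) (a • (b • y₀)) := dist_triangle _ _ _
      _ = dist y₀ (a • y₀) + dist y₀ (b • y₀) := by rw [(hiso a).dist_eq]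
  have disp_inv : ∀ a : ↥(LV X), dist y₀ (a⁻¹ • y₀) = dist y₀ (a • y₀) := by
    intro a
    have h := (hiso a).dist_eq y₀ (a⁻¹ • y₀)
    rw [smul_inv_smul] at h
    rw [← h, dist_comm]
  -- bound on the orbit of the constants
  obtain ⟨C, hC⟩ : ∃ C : ℝ, ∀ γ : Γ, dist y₀ (LV.const X γ • y₀) ≤ C := by
    obtain ⟨C, hC⟩ := Metric.isBounded_iff.1 (hbdd y₀)
    refine ⟨C, fun γ => ?_⟩
    have h1 : (LV.const X (1 : Γ)) • y₀ = y₀ := by rw [map_one, one_smul]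
    have := hC (Set.mem_range_self (1 : Γ)) (Set.mem_range_self γ)
    rwa [h1] at this
  have hC0 : (0 : ℝ) ≤ C := by
    have := hC 1
    rw [map_one, one_smul, dist_self] at this
    exact this
  set M : ℝ := C + ∑ i : Fin p, dist y₀ (LV.coord X i • y₀) with hMdef
  have hsum0 : (0 : ℝ) ≤ ∑ i : Fin p, dist y₀ (LV.coord X i • y₀) :=
    Finset.sum_nonneg fun i _ => dist_nonneg
  have hM0 : (0 : ℝ) ≤ M := add_nonneg hC0 hsum0
  have hCM : C ≤ M := le_add_of_nonneg_right hsum0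
  have hcoordM : ∀ i : Fin p, dist y₀ (LV.coord X i • y₀) ≤ M := by
    intro i
    have h1 : dist y₀ (LV.coord X i • y₀) ≤ ∑ j : Fin p, dist y₀ (LV.coord X j • y₀) :=
      Finset.single_le_sum (f := fun j => dist y₀ (LV.coord X j • y₀))
        (fun j _ => dist_nonneg) (Finset.mem_univ i)
    exact h1.trans (le_add_of_nonneg_left hC0)
  -- displacement of substituted words, with a bound independent of g
  have disp : ∀ w : GWord Γ (n + p), ∃ N : ℕ, ∀ g : ↥G.carrier,
      dist y₀ (stmt17Phi X (g : Fin n → Γ) w • y₀) ≤ (N : ℝ) * M := by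
    intro w
    induction w using Monoid.Coprod.induction_on with
    | inl γ =>
      refine ⟨1, fun g => ?_⟩
      have : stmt17Phi X (g : Fin n → Γ) (Monoid.Coprod.inl γ) = LV.const X γ := by
        simp [stmt17Phi]
      rw [this]
      simpa using (hC γ).trans hCM
    | inr u =>
      induction u using FreeGroup.induction_on with
      | C1 =>
        refine ⟨0, fun g => ?_⟩
        rw [map_one, map_one, one_smul, dist_self]
        simp
      | of i =>
        refine ⟨1, fun g => ?_⟩
        have : stmt17Phi X (g : Fin n → Γ) (Monoid.Coprod.inr (FreeGroup.of i))
            = Fin.addCases (motive := fun _ => ↥(LV X))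
                (fun k => LV.const X ((g : Fin n → Γ) k)) (fun k => LV.coord X k) i := by
          simp [stmt17Phi]
        rw [this]
        induction i using Fin.addCases with
        | left k => simpa [Fin.addCases_left] using (hC _).trans hCM
        | right k => simpa [Fin.addCases_right] using hcoordM k
      | inv_of i ih =>
        obtain ⟨N, hN⟩ := ih
        refine ⟨N, fun g => ?_⟩
        rw [map_inv, map_inv, disp_inv]
        exact hN g
      | mul a b iha ihb =>
        obtain ⟨Na, hNa⟩ := iha
        obtain ⟨Nb, hNb⟩ := ihb
        refine ⟨Na + Nb, fun g => ?_⟩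
        rw [map_mul, map_mul]
        calc dist y₀ ((stmt17Phi X (g : Fin n → Γ) (Monoid.Coprod.inr a)
              * stmt17Phi X (g : Fin n → Γ) (Monoid.Coprod.inr b)) • y₀)
            ≤ dist y₀ (stmt17Phi X (g : Fin n → Γ) (Monoid.Coprod.inr a) • y₀)
              + dist y₀ (stmt17Phi X (g : Fin n → Γ) (Monoid.Coprod.inr b) • y₀) :=
            disp_mul _ _
          _ ≤ (Na : ℝ) * M + (Nb : ℝ) * M := add_le_add (hNa g) (hNb g)
          _ = ((Na + Nb : ℕ) : ℝ) * M := by push_cast; ring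
    | mul a b iha ihb =>
      obtain ⟨Na, hNa⟩ := iha
      obtain ⟨Nb, hNb⟩ := ihb
      refine ⟨Na + Nb, fun g => ?_⟩
      rw [map_mul]
      calc dist y₀ ((stmt17Phi X (g : Fin n → Γ) a * stmt17Phi X (g : Fin n → Γ) b) • y₀)
          ≤ dist y₀ (stmt17Phi X (g : Fin n → Γ) a • y₀)
            + dist y₀ (stmt17Phi X (g : Fin n → Γ) b • y₀) := disp_mul _ _
        _ ≤ (Na : ℝ) * M + (Nb : ℝ) * M := add_le_add (hNa g) (hNb g)
        _ = ((Na + Nb : ℕ) : ℝ) * M := by push_cast; ring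
  -- choose the words describing the action and bounds for them
  choose w hw using A.algebraic
  choose N hN using fun i => disp (w i)
  set K₀ : ℝ := (((∑ i : Fin p, N i : ℕ) : ℝ) + 1) * M with hK₀def
  have hNK : ∀ i : Fin p, (N i : ℝ) * M ≤ K₀ := by
    intro i
    refine mul_le_mul_of_nonneg_right ?_ hM0
    have : N i ≤ ∑ j : Fin p, N j := Finset.single_le_sum (fun j _ => Nat.zero_le _)
      (Finset.mem_univ i)
    calc (N i : ℝ) ≤ ((∑ j : Fin p, N j : ℕ) : ℝ) := by exact_mod_cast this
      _ ≤ _ := by linarith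
  have hMK : M ≤ K₀ := by
    have h1 : (1 : ℝ) ≤ ((∑ i : Fin p, N i : ℕ) : ℝ) + 1 :=
      le_add_of_nonneg_left (Nat.cast_nonneg _)
    calc M = 1 * M := (one_mul M).symm
      _ ≤ K₀ := mul_le_mul_of_nonneg_right h1 hM0
  have hK₀0 : (0 : ℝ) ≤ K₀ := hM0.trans hMK
  -- the substitution homomorphism τ_g^*
  set Ψ : ↥G.carrier → (GWord Γ p →* ↥(LV X)) := fun g =>
    Monoid.Coprod.lift (LV.const X)
      (FreeGroup.lift fun i => stmt17Phi X (g : Fin n → Γ) (w i)) with hΨdef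
  have psi_coe : ∀ (g : ↥G.carrier) (u : GWord Γ p) (v : ↥X),
      ((Ψ g u : ↥(LV X)) : ↥X → Γ) v = evalWord ((A.act g v : Fin p → Γ)) u := by
    intro g
    have h : (LV X).subtype.comp (Ψ g)
        = Pi.monoidHom fun v : ↥X => evalWord ((A.act g v : Fin p → Γ)) := by
      apply Monoid.Coprod.hom_ext
      · refine MonoidHom.ext fun γ => funext fun v => ?_
        simpa [hΨdef, evalWord, Pi.monoidHom, MonoidHom.pi_apply] using stmt17_const_apply X γ v
      · refine FreeGroup.ext_hom _ _ fun i => funext fun v => ?_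
        have h1 : ((Ψ g (Monoid.Coprod.inr (FreeGroup.of i)) : ↥(LV X)) : ↥X → Γ) v
            = evalWord (Fin.append (g : Fin n → Γ) (v : Fin p → Γ)) (w i) := by
          simpa [hΨdef] using stmt17Phi_apply X (g : Fin n → Γ) (w i) v
        have h2 : evalWord ((A.act g v : Fin p → Γ)) (Monoid.Coprod.inr (FreeGroup.of i))
            = (A.act g v : Fin p → Γ) i := by simp [evalWord]
        simpa [h2, hw i g v, Pi.monoidHom, MonoidHom.pi_apply] using h1
    intro u v
    exact congrFun (DFunLike.congr_fun h u) v
  -- displacement bounds for the images of generators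
  have hgen : ∀ s ∈ LV.genSet X, ∃ u : GWord Γ p,
      (wordEval X).rangeRestrict u = s
        ∧ ∀ g : ↥G.carrier, dist y₀ (Ψ g u • y₀) ≤ K₀ := by
    have hΨof : ∀ (g : ↥G.carrier) (i : Fin p),
        Ψ g (Monoid.Coprod.inr (FreeGroup.of i)) = stmt17Phi X (g : Fin n → Γ) (w i) := by
      intro g i; simp [hΨdef]
    rintro s (⟨i, rfl | rfl⟩ | ⟨γ, hγ, rfl⟩)
    · refine ⟨Monoid.Coprod.inr (FreeGroup.of i), rfl, fun g => ?_⟩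
      rw [hΨof]
      exact (hN i g).trans (hNK i)
    · refine ⟨(Monoid.Coprod.inr (FreeGroup.of i))⁻¹, by rw [map_inv]; rfl, fun g => ?_⟩
      rw [map_inv, hΨof, disp_inv]
      exact (hN i g).trans (hNK i)
    · refine ⟨Monoid.Coprod.inl γ, rfl, fun g => ?_⟩
      have h1 : Ψ g (Monoid.Coprod.inl γ) = LV.const X γ := by simp [hΨdef]
      rw [h1]
      exact (hC γ).trans (hCM.trans hMK)
  -- lists of generators
  have hlist : ∀ l : List ↥(LV X), (∀ s ∈ l, s ∈ LV.genSet X) → ∃ u : GWord Γ p,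
      (wordEval X).rangeRestrict u = l.prod
        ∧ ∀ g : ↥G.carrier, dist y₀ (Ψ g u • y₀) ≤ (l.length : ℝ) * K₀ := by
    intro l
    induction l with
    | nil =>
      intro _
      refine ⟨1, by simp; rfl, fun g => ?_⟩
      rw [map_one, one_smul, dist_self]
      simp
    | cons s t ih =>
      intro hst
      obtain ⟨u, hu, hub⟩ := hgen s (hst s (List.mem_cons_self (a := s) (l := t)))
      obtain ⟨u', hu', hub'⟩ := ih fun a ha => hst a (List.mem_cons_of_mem s ha)
      refine ⟨u * u', by rw [map_mul, hu, hu', List.prod_cons]; rfl, fun g => ?_⟩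
      rw [map_mul]
      calc dist y₀ ((Ψ g u * Ψ g u') • y₀)
          ≤ dist y₀ (Ψ g u • y₀) + dist y₀ (Ψ g u' • y₀) := disp_mul _ _
        _ ≤ K₀ + (t.length : ℝ) * K₀ := add_le_add (hub g) (hub' g)
        _ = ((s :: t).length : ℝ) * K₀ := by
            rw [List.length_cons]; push_cast; ring
  -- genSet is closed under inverses
  have hinv : ∀ s ∈ LV.genSet X, s⁻¹ ∈ LV.genSet X := by
    rintro s (⟨i, rfl | rfl⟩ | ⟨γ, hγ, rfl⟩)
    · exact Or.inl ⟨i, Or.inr rfl⟩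
    · exact Or.inl ⟨i, Or.inl (inv_inv _)⟩
    · refine Or.inr ⟨γ⁻¹, inv_ne_one.2 hγ, ?_⟩
      rw [map_inv]
  -- every element of L_X is a product of generators
  have hrepr : ∀ f : ↥(LV X), ∃ l : List ↥(LV X),
      (∀ s ∈ l, s ∈ LV.genSet X) ∧ l.prod = f := by
    intro f
    obtain ⟨w', hw'⟩ := f.2
    suffices h : ∀ w'' : GWord Γ p, ∃ l : List ↥(LV X),
        (∀ s ∈ l, s ∈ LV.genSet X) ∧ l.prod = (wordEval X).rangeRestrict w'' by
      obtain ⟨l, h1, h2⟩ := h w'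
      exact ⟨l, h1, h2.trans (Subtype.ext hw')⟩
    intro w''
    induction w'' using Monoid.Coprod.induction_on with
    | inl γ =>
      by_cases hγ : γ = 1
      · exact ⟨[], by simp, by simp [hγ]; rfl⟩
      · exact ⟨[LV.const X γ], by simpa [LV.genSet] using Or.inr ⟨γ, hγ, rfl⟩, by
          rw [List.prod_singleton]; rfl⟩
    | inr u =>
      induction u using FreeGroup.induction_on with
      | C1 => exact ⟨[], by simp, by simp; rfl⟩
      | of i =>
        exact ⟨[LV.coord X i], by simpa [LV.genSet] using Or.inl ⟨i, Or.inl rfl⟩, by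
          rw [List.prod_singleton]; rfl⟩
      | inv_of i ih =>
        obtain ⟨l, h1, h2⟩ := ih
        refine ⟨(l.map fun x => x⁻¹).reverse, ?_, ?_⟩
        · intro s hs
          rw [List.mem_reverse, List.mem_map] at hs
          obtain ⟨a, ha, rfl⟩ := hs
          exact hinv a (h1 a ha)
        · rw [← List.prod_inv_reverse, h2]
          simp [map_inv]; rfl
      | mul a b iha ihb =>
        obtain ⟨la, ha1, ha2⟩ := iha
        obtain ⟨lb, hb1, hb2⟩ := ihb
        refine ⟨la ++ lb, ?_, ?_⟩
        · intro s hs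
          rcases List.mem_append.1 hs with h | h
          · exact ha1 s h
          · exact hb1 s h
        · rw [List.prod_append, ha2, hb2]
          simp [map_mul]; rfl
    | mul a b iha ihb =>
      obtain ⟨la, ha1, ha2⟩ := iha
      obtain ⟨lb, hb1, hb2⟩ := ihb
      refine ⟨la ++ lb, ?_, ?_⟩
      · intro s hs
        rcases List.mem_append.1 hs with h | h
        · exact ha1 s h
        · exact hb1 s h
      · rw [List.prod_append, ha2, hb2, map_mul]; rfl
  -- conclusion
  refine ⟨K₀, fun g f fg hfg => ?_⟩
  have hSne : {m | ∃ l : List ↥(LV X), l.length = m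
      ∧ (∀ s ∈ l, s ∈ LV.genSet X) ∧ l.prod = f}.Nonempty := by
    obtain ⟨l, h1, h2⟩ := hrepr f
    exact ⟨l.length, l, rfl, h1, h2⟩
  obtain ⟨l, hlen, hl1, hl2⟩ := Nat.sInf_mem hSne
  have hlen' : l.length = LV.len X f := hlen
  obtain ⟨u, hu, hub⟩ := hlist l hl1
  have hfgu : fg = Ψ g u := by
    apply Subtype.ext
    funext v
    have h1 : (f : ↥X → Γ) = wordEval X u := by
      have : (wordEval X).rangeRestrict u = f := hu.trans hl2
      exact (congrArg Subtype.val this).symm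
    calc (fg : ↥X → Γ) v = (f : ↥X → Γ) (A.act g v) := by rw [hfg]
      _ = evalWord ((A.act g v : Fin p → Γ)) u := by rw [h1]; rfl
      _ = ((Ψ g u : ↥(LV X)) : ↥X → Γ) v := (psi_coe g u v).symm
  have hbelow : BddBelow (Set.range fun y : Y => dist y (fg • y)) := by
    refine ⟨0, ?_⟩
    rintro _ ⟨y, rfl⟩
    exact dist_nonneg
  calc (⨅ y : Y, dist y (fg • y)) ≤ dist y₀ (fg • y₀) := ciInf_le hbelow y₀
    _ ≤ (l.length : ℝ) * K₀ := by rw [hfgu]; exact hub g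
    _ = K₀ * (LV.len X f : ℝ) := by rw [mul_comm, ← hlen']
end
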